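/- arXiv:2408.11911 — 7 statements merged into one kernel-verified Lean document; each statement's English description precedes it below -/
import Mathlib

section
/- Let (S_G, M_G) be a quantum graph on M_n(ℂ) and (S_H, M_H) a quantum graph on M_m(ℂ). Set M_K = M_G ⊗ M_H (the unital star-subalgebra of M_{nm}(ℂ) spanned by Kronecker products of elements of M_G and M_H) and S_K = S_G ⊗ M_H' + M_G' ⊗ S_H (Cartesian product). Then (S_K, M_K) is a quantum graph on M_{nm}(ℂ): S_K is a ℂ-linear subspace closed under conjugate transpose, A X B ∈ S_K for all A, B in the commutant M_K' of M_K in M_{nm}(ℂ) and all X ∈ S_K, and Tr(X Aᴴ) = 0 for all X ∈ S_K and A ∈ M_K'. -/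
open Matrix Kronecker BigOperators

noncomputable section

/-- The commutant of a set of matrices in `M_I(ℂ)`. -/
def commutant {I : Type*} [Fintype I] (M : Set (Matrix I I ℂ)) : Set (Matrix I I ℂ) :=
  {Y | ∀ A ∈ M, Y * A = A * Y}

/-- The ℂ-linear span of Kronecker products `v ⊗ₖ w` with `v ∈ V`, `w ∈ W`. -/
def tensorSpan {I J : Type*} [Fintype I] [Fintype J]
    (V : Set (Matrix I I ℂ)) (W : Set (Matrix J J ℂ)) :
    Submodule ℂ (Matrix (I × J) (I × J) ℂ) :=
  Submodule.span ℂ {x | ∃ v ∈ V, ∃ w ∈ W, x = v ⊗ₖ w}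

/-- A pair `(S, M)` is a quantum graph: `S` is closed under conjugate transpose, is a
bimodule over the commutant of `M`, and is trace-orthogonal to the commutant of `M`. -/
def IsQuantumGraph {I : Type*} [Fintype I]
    (S : Submodule ℂ (Matrix I I ℂ)) (M : Set (Matrix I I ℂ)) : Prop :=
  (∀ X ∈ S, Xᴴ ∈ S) ∧
  (∀ A ∈ commutant M, ∀ B ∈ commutant M, ∀ X ∈ S, A * X * B ∈ S) ∧
  (∀ X ∈ S, ∀ A ∈ commutant M, Matrix.trace (X * Aᴴ) = 0)

/-- Product of the matrices `P a`, `a ∈ T`, taken in increasing order of indices. -/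
def finsetProd {β : Type*} [Monoid β] {c : ℕ} (P : Fin c → β) (T : Finset (Fin c)) : β :=
  ((T.sort (· ≤ ·)).map P).prod

/-- A quantum `c`-coloring of `(S, M)` (with auxiliary algebra `M_k(ℂ)`). -/
def IsQColoring {I : Type*} [Fintype I] [DecidableEq I] {c k : ℕ}
    (S : Submodule ℂ (Matrix I I ℂ)) (M : Set (Matrix I I ℂ))
    (P : Fin c → Matrix (I × Fin k) (I × Fin k) ℂ) : Prop :=
  (∀ a, P a ∈ tensorSpan M (Set.univ : Set (Matrix (Fin k) (Fin k) ℂ))) ∧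
  (∀ a, (P a)ᴴ = P a) ∧
  (∀ a, P a * P a = P a) ∧
  ((∑ a, P a) = 1) ∧
  (∀ X ∈ S, ∀ a, P a * (X ⊗ₖ (1 : Matrix (Fin k) (Fin k) ℂ)) * P a = 0)

def HasQColoring {I : Type*} [Fintype I] [DecidableEq I]
    (S : Submodule ℂ (Matrix I I ℂ)) (M : Set (Matrix I I ℂ)) (c : ℕ) : Prop :=
  ∃ k : ℕ, 1 ≤ k ∧ ∃ P : Fin c → Matrix (I × Fin k) (I × Fin k) ℂ, IsQColoring S M P

/-- The quantum chromatic number `χ_q(S, M) ∈ ℕ∞`. -/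
def qChrom {I : Type*} [Fintype I] [DecidableEq I]
    (S : Submodule ℂ (Matrix I I ℂ)) (M : Set (Matrix I I ℂ)) : ℕ∞ :=
  ⨅ (c : ℕ) (_ : HasQColoring S M c), (c : ℕ∞)

/-- A quantum `b`-fold coloring of `(S, M)` using `c` colors
(with auxiliary algebra `M_k(ℂ)`). -/
def IsQBFoldColoring {I : Type*} [Fintype I] [DecidableEq I] {c k : ℕ}
    (S : Submodule ℂ (Matrix I I ℂ)) (M : Set (Matrix I I ℂ)) (b : ℕ)
    (P : Fin c → Matrix (I × Fin k) (I × Fin k) ℂ) : Prop :=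
  (∀ a, P a ∈ tensorSpan M (Set.univ : Set (Matrix (Fin k) (Fin k) ℂ))) ∧
  (∀ a a', P a * P a' = P a' * P a) ∧
  (∀ a, (P a)ᴴ = P a) ∧
  (∀ a, P a * P a = P a) ∧
  ((∑ T ∈ Finset.univ.powersetCard b, finsetProd P T) = 1) ∧
  (∀ X ∈ S, ∀ a, P a * (X ⊗ₖ (1 : Matrix (Fin k) (Fin k) ℂ)) * P a = 0)

def HasQBFoldColoring {I : Type*} [Fintype I] [DecidableEq I]
    (S : Submodule ℂ (Matrix I I ℂ)) (M : Set (Matrix I I ℂ)) (b c : ℕ) : Prop :=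
  ∃ k : ℕ, 1 ≤ k ∧ ∃ P : Fin c → Matrix (I × Fin k) (I × Fin k) ℂ, IsQBFoldColoring S M b P

/-- The quantum `b`-fold chromatic number `χ_{b,q}(S, M) ∈ ℕ∞`. -/
def qbChrom {I : Type*} [Fintype I] [DecidableEq I]
    (S : Submodule ℂ (Matrix I I ℂ)) (M : Set (Matrix I I ℂ)) (b : ℕ) : ℕ∞ :=
  ⨅ (c : ℕ) (_ : HasQBFoldColoring S M b c), (c : ℕ∞)

/-- A local `b`-fold coloring of `(S, M)` using `c` colors (projections in `M` itself). -/
def IsLocalBFoldColoring {I : Type*} [Fintype I] [DecidableEq I] {c : ℕ}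
    (S : Submodule ℂ (Matrix I I ℂ)) (M : Set (Matrix I I ℂ)) (b : ℕ)
    (P : Fin c → Matrix I I ℂ) : Prop :=
  (∀ a, P a ∈ M) ∧
  (∀ a a', P a * P a' = P a' * P a) ∧
  (∀ a, (P a)ᴴ = P a) ∧
  (∀ a, P a * P a = P a) ∧
  ((∑ T ∈ Finset.univ.powersetCard b, finsetProd P T) = 1) ∧
  (∀ X ∈ S, ∀ a, P a * X * P a = 0)

def HasLocalBFoldColoring {I : Type*} [Fintype I] [DecidableEq I]
    (S : Submodule ℂ (Matrix I I ℂ)) (M : Set (Matrix I I ℂ)) (b c : ℕ) : Prop :=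
  ∃ P : Fin c → Matrix I I ℂ, IsLocalBFoldColoring S M b P

/-- The local `b`-fold chromatic number. -/
def localBChrom {I : Type*} [Fintype I] [DecidableEq I]
    (S : Submodule ℂ (Matrix I I ℂ)) (M : Set (Matrix I I ℂ)) (b : ℕ) : ℕ∞ :=
  ⨅ (c : ℕ) (_ : HasLocalBFoldColoring S M b c), (c : ℕ∞)

/-- `S_G`: span of matrix units on edges of a simple graph. -/
def graphSpan {V : Type*} [Fintype V] [DecidableEq V] (G : SimpleGraph V) :
    Submodule ℂ (Matrix V V ℂ) :=
  Submodule.span ℂ {x | ∃ v w, G.Adj v w ∧ x = Matrix.single v w 1}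

/-- The partial trace over the first tensor factor. -/
def ptrace {I J : Type*} [Fintype I] (P : Matrix (I × J) (I × J) ℂ) : Matrix J J ℂ :=
  Matrix.of fun p q => ∑ i, P (i, p) (i, q)

/-- The complete quantum graph operator space: everything trace-orthogonal to `M'`. -/
def completeS {I : Type*} [Fintype I] (M : Set (Matrix I I ℂ)) :
    Submodule ℂ (Matrix I I ℂ) where
  carrier := {X | ∀ A ∈ commutant M, Matrix.trace (X * Aᴴ) = 0}
  add_mem' := by
    intro x y hx hy A hA
    rw [Set.mem_setOf_eq] at *
    rw [Matrix.add_mul, Matrix.trace_add, hx A hA, hy A hA, add_zero]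
  zero_mem' := by
    intro A hA
    rw [Matrix.zero_mul, Matrix.trace_zero]
  smul_mem' := by
    intro r x hx A hA
    rw [Set.mem_setOf_eq] at *
    rw [Matrix.smul_mul, Matrix.trace_smul, hx A hA, smul_zero]


/-! The commutant of `M_G ⊗ M_H` is `M_G' ⊗ M_H'`. An operator commuting with `1 ⊗ M_H` has all
its blocks in `M_H'`; expanding the blocks in a basis `(b_k)` of `M_H'` writes it as
`∑ X_k ⊗ b_k`, and commuting with `M_G ⊗ 1` then forces every `X_k` into `M_G'`, by linear
independence of the `b_k`. Given this, both summands `S_G ⊗ M_H'` and `M_G' ⊗ S_H` are quantum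
graphs for `M_G ⊗ M_H` by a check on elementary tensors: adjoints and products with
`M_G' ⊗ M_H'` act factorwise, and `tr ((s ⊗ r) (a ⊗ b)ᴴ) = tr (s aᴴ) tr (r bᴴ)` has a vanishing
factor. -/

open scoped Pointwise

section

variable {I J : Type*}

theorem eq_of_sum_kronecker_eq {ι : Type*} [Fintype ι] {b : ι → Matrix J J ℂ}
    (hb : LinearIndependent ℂ b) {X Y : ι → Matrix I I ℂ}
    (h : ∑ k, X k ⊗ₖ b k = ∑ k, Y k ⊗ₖ b k) : X = Y := by
  funext k
  ext i j
  refine Fintype.linearIndependent_iffₛ.mp hb (fun k => X k i j) (fun k => Y k i j) ?_ k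
  ext p q
  simpa [Matrix.sum_apply] using congrFun (congrFun h (i, p)) (j, q)

theorem eq_sum_kronecker_basis {ι : Type*} [Fintype ι] {C : Submodule ℂ (Matrix J J ℂ)}
    (e : Module.Basis ι ℂ C) {T : Matrix (I × J) (I × J) ℂ}
    (hT : ∀ i j, (comp I I J J ℂ).symm T i j ∈ C) :
    T = ∑ k, (of fun i j => e.repr ⟨_, hT i j⟩ k) ⊗ₖ (e k : Matrix J J ℂ) := by
  ext ⟨i, p⟩ ⟨j, q⟩
  have h := congrArg (fun x : C => (x : Matrix J J ℂ) p q) (e.sum_repr ⟨_, hT i j⟩)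
  simp only [Submodule.coe_sum, SetLike.val_smul, Matrix.sum_apply, Matrix.smul_apply,
    smul_eq_mul, comp_symm_apply] at h
  simp [Matrix.sum_apply, h]

variable [Fintype I] [Fintype J]

theorem commutant_eq_centralizer (M : Set (Matrix I I ℂ)) :
    commutant M = Set.centralizer M :=
  Set.ext fun _ => forall₂_congr fun _ _ => eq_comm

theorem conjTranspose_mem_commutant {M : Set (Matrix I I ℂ)} (hM : ∀ A ∈ M, Aᴴ ∈ M)
    {Y : Matrix I I ℂ} (hY : Y ∈ commutant M) : Yᴴ ∈ commutant M := by
  rw [commutant_eq_centralizer] at hY ⊢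
  exact Set.star_mem_centralizer' hM hY

theorem mul_mul_mem_commutant {M : Set (Matrix I I ℂ)} {A B Y : Matrix I I ℂ}
    (hA : A ∈ commutant M) (hB : B ∈ commutant M) (hY : Y ∈ commutant M) :
    A * Y * B ∈ commutant M := by
  rw [commutant_eq_centralizer] at *
  exact Set.mul_mem_centralizer (Set.mul_mem_centralizer hA hY) hB

theorem IsQuantumGraph.sup {S₁ S₂ : Submodule ℂ (Matrix I I ℂ)} {M : Set (Matrix I I ℂ)}
    (h₁ : IsQuantumGraph S₁ M) (h₂ : IsQuantumGraph S₂ M) : IsQuantumGraph (S₁ ⊔ S₂) M := by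
  refine ⟨fun X hX => ?_, fun A hA B hB X hX => ?_, fun X hX A hA => ?_⟩ <;>
    obtain ⟨X₁, hX₁, X₂, hX₂, rfl⟩ := Submodule.mem_sup.mp hX
  · rw [conjTranspose_add]
    exact Submodule.add_mem_sup (h₁.1 X₁ hX₁) (h₂.1 X₂ hX₂)
  · rw [mul_add, add_mul]
    exact Submodule.add_mem_sup (h₁.2.1 A hA B hB X₁ hX₁) (h₂.2.1 A hA B hB X₂ hX₂)
  · rw [add_mul, trace_add, h₁.2.2 X₁ hX₁ A hA, h₂.2.2 X₂ hX₂ A hA, add_zero]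

theorem kronecker_mem_tensorSpan {V : Set (Matrix I I ℂ)} {W : Set (Matrix J J ℂ)}
    {v : Matrix I I ℂ} {w : Matrix J J ℂ} (hv : v ∈ V) (hw : w ∈ W) :
    v ⊗ₖ w ∈ tensorSpan V W :=
  Submodule.subset_span ⟨v, hv, w, hw, rfl⟩

theorem tensorSpan_mono {V V' : Set (Matrix I I ℂ)} {W W' : Set (Matrix J J ℂ)}
    (hV : V ⊆ V') (hW : W ⊆ W') : tensorSpan V W ≤ tensorSpan V' W' :=
  Submodule.span_mono fun _ ⟨v, hv, w, hw, h⟩ => ⟨v, hV hv, w, hW hw, h⟩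

theorem conjTranspose_mem_tensorSpan {V : Set (Matrix I I ℂ)} {W : Set (Matrix J J ℂ)}
    (hV : ∀ v ∈ V, vᴴ ∈ V) (hW : ∀ w ∈ W, wᴴ ∈ W) {X : Matrix (I × J) (I × J) ℂ}
    (hX : X ∈ tensorSpan V W) : Xᴴ ∈ tensorSpan V W := by
  induction hX using Submodule.span_induction with
  | mem x hx =>
    obtain ⟨v, hv, w, hw, rfl⟩ := hx
    rw [conjTranspose_kronecker]
    exact kronecker_mem_tensorSpan (hV v hv) (hW w hw)
  | zero => simp
  | add x y _ _ hx hy => rw [conjTranspose_add]; exact add_mem hx hy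
  | smul c x _ hx => rw [conjTranspose_smul]; exact Submodule.smul_mem _ _ hx

theorem trace_mul_conjTranspose_eq_zero_of_mem_tensorSpan
    {P S : Set (Matrix I I ℂ)} {Q R : Set (Matrix J J ℂ)}
    (h : ∀ s ∈ S, ∀ r ∈ R, ∀ p ∈ P, ∀ q ∈ Q, trace (s * pᴴ) * trace (r * qᴴ) = 0)
    {X A : Matrix (I × J) (I × J) ℂ} (hX : X ∈ tensorSpan S R) (hA : A ∈ tensorSpan P Q) :
    trace (X * Aᴴ) = 0 := by
  induction hX, hA using Submodule.span_induction₂ with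
  | mem_mem x a hx ha =>
    obtain ⟨s, hs, r, hr, rfl⟩ := hx
    obtain ⟨p, hp, q, hq, rfl⟩ := ha
    rw [conjTranspose_kronecker, ← mul_kronecker_mul, trace_kronecker]
    exact h s hs r hr p hp q hq
  | zero_left => simp
  | zero_right => simp
  | add_left _ _ _ _ _ _ hx hy => rw [add_mul, trace_add, hx, hy, add_zero]
  | add_right _ _ _ _ _ _ hy hz => rw [conjTranspose_add, mul_add, trace_add, hy, hz, add_zero]
  | smul_left c _ _ _ _ hx => rw [smul_mul, trace_smul, hx, smul_zero]
  | smul_right c _ _ _ _ hx => rw [conjTranspose_smul, mul_smul_comm, trace_smul, hx, smul_zero]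

variable [DecidableEq I]

theorem comp_symm_one_kronecker_mul (b : Matrix J J ℂ) (T : Matrix (I × J) (I × J) ℂ)
    (i j : I) : (comp I I J J ℂ).symm ((1 ⊗ₖ b) * T) i j = b * (comp I I J J ℂ).symm T i j := by
  ext p q
  simp [mul_apply, Fintype.sum_prod_type, one_apply]

theorem comp_symm_mul_one_kronecker (b : Matrix J J ℂ) (T : Matrix (I × J) (I × J) ℂ)
    (i j : I) : (comp I I J J ℂ).symm (T * (1 ⊗ₖ b)) i j = (comp I I J J ℂ).symm T i j * b := by
  ext p q
  simp [mul_apply, Fintype.sum_prod_type, one_apply]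

theorem comp_symm_mem_commutant {W : Set (Matrix J J ℂ)} {T : Matrix (I × J) (I × J) ℂ}
    (hT : ∀ b ∈ W, (1 ⊗ₖ b) * T = T * (1 ⊗ₖ b)) (i j : I) :
    (comp I I J J ℂ).symm T i j ∈ commutant W := fun b hb => by
  rw [← comp_symm_mul_one_kronecker, ← hT b hb, comp_symm_one_kronecker_mul]

variable [DecidableEq J]

theorem mul_mem_tensorSpan {P S : Set (Matrix I I ℂ)} {Q R : Set (Matrix J J ℂ)}
    {A X : Matrix (I × J) (I × J) ℂ} (hA : A ∈ tensorSpan P Q) (hX : X ∈ tensorSpan S R) :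
    A * X ∈ tensorSpan (P * S) (Q * R) := by
  have hmul := Submodule.mul_mem_mul hA hX
  rw [tensorSpan, tensorSpan, Submodule.span_mul_span] at hmul
  refine Submodule.span_mono ?_ hmul
  rintro _ ⟨_, ⟨p, hp, q, hq, rfl⟩, _, ⟨s, hs, r, hr, rfl⟩, rfl⟩
  exact ⟨p * s, Set.mul_mem_mul hp hs, q * r, Set.mul_mem_mul hq hr,
    (mul_kronecker_mul p s q r).symm⟩

theorem mul_mul_mem_tensorSpan {P S : Set (Matrix I I ℂ)} {Q R : Set (Matrix J J ℂ)}
    (hS : ∀ a ∈ P, ∀ b ∈ P, ∀ x ∈ S, a * x * b ∈ S)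
    (hR : ∀ a ∈ Q, ∀ b ∈ Q, ∀ x ∈ R, a * x * b ∈ R)
    {A B X : Matrix (I × J) (I × J) ℂ} (hA : A ∈ tensorSpan P Q) (hB : B ∈ tensorSpan P Q)
    (hX : X ∈ tensorSpan S R) : A * X * B ∈ tensorSpan S R := by
  refine tensorSpan_mono ?_ ?_ (mul_mem_tensorSpan (mul_mem_tensorSpan hA hX) hB)
  · rintro _ ⟨_, ⟨a, ha, x, hx, rfl⟩, b, hb, rfl⟩
    exact hS a ha b hb x hx
  · rintro _ ⟨_, ⟨a, ha, x, hx, rfl⟩, b, hb, rfl⟩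
    exact hR a ha b hb x hx

theorem mem_tensorSpan_commutant_of_commute {V : Set (Matrix I I ℂ)}
    {W : Set (Matrix J J ℂ)} {T : Matrix (I × J) (I × J) ℂ}
    (hV : ∀ a ∈ V, (a ⊗ₖ 1) * T = T * (a ⊗ₖ 1)) (hW : ∀ b ∈ W, (1 ⊗ₖ b) * T = T * (1 ⊗ₖ b)) :
    T ∈ tensorSpan (commutant V) (commutant W) := by
  let C := (Subalgebra.centralizer ℂ W).toSubmodule
  have hC : ∀ x, x ∈ C ↔ x ∈ commutant W := by
    intro x
    rw [commutant_eq_centralizer]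
    rfl
  have hT : ∀ i j, (comp I I J J ℂ).symm T i j ∈ C := fun i j =>
    (hC _).mpr (comp_symm_mem_commutant hW i j)
  let e := Module.Free.chooseBasis ℂ C
  have hsum := eq_sum_kronecker_basis e hT
  have hX : ∀ k, (of fun i j => e.repr ⟨_, hT i j⟩ k) ∈ commutant V := by
    intro k a ha
    have h := hV a ha
    rw [hsum, Finset.mul_sum, Finset.sum_mul] at h
    simp only [← mul_kronecker_mul, one_mul, mul_one] at h
    exact (congrFun (eq_of_sum_kronecker_eq
      (e.linearIndependent.map' C.subtype C.ker_subtype) h) k).symm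
  rw [hsum]
  exact Submodule.sum_mem _ fun k _ => kronecker_mem_tensorSpan (hX k) ((hC _).mp (e k).2)

theorem commutant_tensorSpan_subset {V : Set (Matrix I I ℂ)} {W : Set (Matrix J J ℂ)}
    (hV : 1 ∈ V) (hW : 1 ∈ W) :
    commutant (tensorSpan V W : Set (Matrix (I × J) (I × J) ℂ)) ⊆
      tensorSpan (commutant V) (commutant W) := fun _ hT =>
  mem_tensorSpan_commutant_of_commute (fun _ ha => (hT _ (kronecker_mem_tensorSpan ha hW)).symm)
    (fun _ hb => (hT _ (kronecker_mem_tensorSpan hV hb)).symm)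

theorem isQuantumGraph_tensorSpan {V S : Set (Matrix I I ℂ)} {W R : Set (Matrix J J ℂ)}
    (hV : 1 ∈ V) (hW : 1 ∈ W) (hS_star : ∀ s ∈ S, sᴴ ∈ S) (hR_star : ∀ r ∈ R, rᴴ ∈ R)
    (hS : ∀ a ∈ commutant V, ∀ b ∈ commutant V, ∀ x ∈ S, a * x * b ∈ S)
    (hR : ∀ a ∈ commutant W, ∀ b ∈ commutant W, ∀ x ∈ R, a * x * b ∈ R)
    (htr : ∀ s ∈ S, ∀ r ∈ R, ∀ a ∈ commutant V, ∀ b ∈ commutant W,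
      trace (s * aᴴ) * trace (r * bᴴ) = 0) :
    IsQuantumGraph (tensorSpan S R) (tensorSpan V W : Set (Matrix (I × J) (I × J) ℂ)) := by
  have hcomm := commutant_tensorSpan_subset hV hW
  exact ⟨fun X hX => conjTranspose_mem_tensorSpan hS_star hR_star hX,
    fun A hA B hB X hX => mul_mul_mem_tensorSpan hS hR (hcomm hA) (hcomm hB) hX,
    fun X hX A hA => trace_mul_conjTranspose_eq_zero_of_mem_tensorSpan htr hX (hcomm hA)⟩

end

theorem cartesianProduct_isQuantumGraph {n m : ℕ}
    (SG : Submodule ℂ (Matrix (Fin n) (Fin n) ℂ))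
    (MG : StarSubalgebra ℂ (Matrix (Fin n) (Fin n) ℂ))
    (SH : Submodule ℂ (Matrix (Fin m) (Fin m) ℂ))
    (MH : StarSubalgebra ℂ (Matrix (Fin m) (Fin m) ℂ))
    (hG : IsQuantumGraph SG (MG : Set (Matrix (Fin n) (Fin n) ℂ)))
    (hH : IsQuantumGraph SH (MH : Set (Matrix (Fin m) (Fin m) ℂ))) :
    IsQuantumGraph (tensorSpan (SG : Set (Matrix (Fin n) (Fin n) ℂ)) (commutant (MH : Set (Matrix (Fin m) (Fin m) ℂ))) ⊔ tensorSpan (commutant (MG : Set (Matrix (Fin n) (Fin n) ℂ))) (SH : Set (Matrix (Fin m) (Fin m) ℂ))) ((tensorSpan (MG : Set (Matrix (Fin n) (Fin n) ℂ)) (MH : Set (Matrix (Fin m) (Fin m) ℂ)) : Submodule ℂ (Matrix (Fin n × Fin m) (Fin n × Fin m) ℂ)) : Set (Matrix (Fin n × Fin m) (Fin n × Fin m) ℂ)) := by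
  have hMG_star : ∀ a ∈ (MG : Set (Matrix (Fin n) (Fin n) ℂ)), aᴴ ∈ (MG : Set _) :=
    fun _ ha => star_mem ha
  have hMH_star : ∀ b ∈ (MH : Set (Matrix (Fin m) (Fin m) ℂ)), bᴴ ∈ (MH : Set _) :=
    fun _ hb => star_mem hb
  refine IsQuantumGraph.sup ?_ ?_
  · exact isQuantumGraph_tensorSpan MG.one_mem MH.one_mem hG.1
      (fun _ => conjTranspose_mem_commutant hMH_star) hG.2.1
      (fun _ ha _ hb _ hx => mul_mul_mem_commutant ha hb hx)
      (fun s hs _ _ a ha _ _ => by rw [hG.2.2 s hs a ha, zero_mul])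
  · exact isQuantumGraph_tensorSpan MG.one_mem MH.one_mem
      (fun _ => conjTranspose_mem_commutant hMG_star) hH.1
      (fun _ ha _ hb _ hx => mul_mul_mem_commutant ha hb hx) hH.2.1
      (fun _ _ r hr _ _ b hb => by rw [hH.2.2 r hr b hb, mul_zero])

end
end

section
/- Let G and H be finite simple graphs with vertex sets V and W. In the algebra of matrices indexed by V×W, identified with M_V(ℂ) ⊗ M_W(ℂ) via E_{(v1,w1),(v2,w2)} = E_{v1 v2} ⊗ₖ E_{w1 w2}, the ℂ-span of the matrix units E_{(v1,w1),(v2,w2)} over all pairs adjacent in the lexicographic product G[H] (i.e., v1 adjacent to v2 in G, or v1 = v2 and w1 adjacent to w2 in H) equals S_G ⊗ M_W(ℂ) + D_V ⊗ S_H. -/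
open Matrix Kronecker BigOperators

noncomputable section

/-! Every space involved is spanned by matrix units, and `E_{v₁v₂} ⊗ₖ E_{w₁w₂} = E_{(v₁,w₁),(v₂,w₂)}`.
Since `tensorSpan` only depends on the spans of its factors, `S_G ⊗ M_W` is spanned by the units
over (edge of `G`) × (any pair in `W`), and `D_V ⊗ S_H` by the units over (diagonal pair in `V`) ×
(edge of `H`); together these are exactly the units on the edges of `G[H]`. -/

open Submodule Set

section TensorSpan

variable {I J : Type*} [Fintype I] [Fintype J]

theorem tensorSpan_eq_map₂ (V : Set (Matrix I I ℂ)) (W : Set (Matrix J J ℂ)) :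
    tensorSpan V W = map₂ (kroneckerBilinear (R := ℂ)) (span ℂ V) (span ℂ W) := by
  rw [map₂_span_span, tensorSpan]
  congr 1
  ext x
  simp [eq_comm, kroneckerBilinear]

theorem tensorSpan_congr_span {V V' : Set (Matrix I I ℂ)} {W W' : Set (Matrix J J ℂ)}
    (hV : span ℂ V = span ℂ V') (hW : span ℂ W = span ℂ W') :
    tensorSpan V W = tensorSpan V' W' := by
  rw [tensorSpan_eq_map₂, tensorSpan_eq_map₂, hV, hW]

end TensorSpan

section MatrixUnits

variable {R I : Type*} [Semiring R] [DecidableEq I]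

theorem Matrix.isDiag_single_same (i : I) (r : R) : (single i i r).IsDiag := by
  intro a b hab
  rw [single_apply, if_neg]
  rintro ⟨rfl, rfl⟩
  exact hab rfl

variable [Fintype I]

theorem Matrix.span_range_single_one :
    span R (range fun p : I × I => single p.1 p.2 (1 : R)) = ⊤ := by
  have : ⇑(stdBasis R I I) = fun p => single p.1 p.2 1 :=
    funext fun p => stdBasis_eq_single R p.1 p.2
  rw [← this, Module.Basis.span_eq]

theorem Matrix.span_isDiag :
    span R {A : Matrix I I R | A.IsDiag} = span R (range fun i : I => single i i (1 : R)) := by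
  refine span_eq_span ?_ ?_
  · intro A (hA : A.IsDiag)
    rw [← hA.diagonal_diag, ← sum_single_eq_diagonal]
    refine sum_mem fun i _ => ?_
    rw [← mul_one (A.diag i), ← smul_eq_mul, ← smul_single]
    exact smul_mem _ _ (subset_span ⟨i, rfl⟩)
  · rintro _ ⟨i, rfl⟩
    exact subset_span (isDiag_single_same i 1)

end MatrixUnits

theorem lexicographicProduct_classical_span {V W : Type*}
    [Fintype V] [DecidableEq V] [Fintype W] [DecidableEq W]
    (G : SimpleGraph V) (H : SimpleGraph W) :
    Submodule.span ℂ {x : Matrix (V × W) (V × W) ℂ |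
        ∃ v₁ w₁ v₂ w₂, (G.Adj v₁ v₂ ∨ (v₁ = v₂ ∧ H.Adj w₁ w₂)) ∧
          x = Matrix.single (v₁, w₁) (v₂, w₂) 1}
      = tensorSpan (graphSpan G : Set (Matrix V V ℂ)) (Set.univ : Set (Matrix W W ℂ))
          ⊔ tensorSpan {A : Matrix V V ℂ | A.IsDiag} (graphSpan H : Set (Matrix W W ℂ)) := by
  rw [graphSpan, graphSpan,
    tensorSpan_congr_span span_span (span_univ.trans span_range_single_one.symm),
    tensorSpan_congr_span span_isDiag span_span, tensorSpan, tensorSpan, ← span_union]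
  have unit_kronecker (v₁ v₂ : V) (w₁ w₂ : W) :
      single v₁ v₂ (1 : ℂ) ⊗ₖ single w₁ w₂ 1 = single (v₁, w₁) (v₂, w₂) 1 := by
    rw [single_kronecker_single, one_mul]
  congr 1
  ext x
  simp only [mem_union, mem_setOf_eq, mem_range, Prod.exists]
  constructor
  · rintro ⟨v₁, w₁, v₂, w₂, hG | ⟨rfl, hH⟩, rfl⟩
    · exact Or.inl ⟨_, ⟨v₁, v₂, hG, rfl⟩, _, ⟨w₁, w₂, rfl⟩, (unit_kronecker ..).symm⟩
    · exact Or.inr ⟨_, ⟨v₁, rfl⟩, _, ⟨w₁, w₂, hH, rfl⟩, (unit_kronecker ..).symm⟩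
  · rintro (⟨_, ⟨v₁, v₂, hG, rfl⟩, _, ⟨w₁, w₂, rfl⟩, rfl⟩ |
      ⟨_, ⟨v, rfl⟩, _, ⟨w₁, w₂, hH, rfl⟩, rfl⟩)
    · exact ⟨v₁, w₁, v₂, w₂, Or.inl hG, unit_kronecker ..⟩
    · exact ⟨v, w₁, v, w₂, Or.inr ⟨rfl, hH⟩, unit_kronecker ..⟩
end
end

section
/- Let (S, M) be a quantum graph on M_n(ℂ), let b, c, k ≥ 1, and suppose {Q_T}, indexed by the b-element subsets T of {1,…,c}, is a family of self-adjoint idempotents in M ⊗ M_k(ℂ) with ∑_T Q_T = I and Q_{T1} (X ⊗ₖ I_k) Q_{T2} = 0 for all X ∈ S whenever T1 ∩ T2 ≠ ∅. For each a ∈ {1,…,c} set P_a = ∑_{T : a ∈ T} Q_T. Then the P_a are pairwise commuting self-adjoint idempotents in M ⊗ M_k(ℂ) satisfying ∑_{T ⊆ {1,…,c}, |T| = b} ∏_{a ∈ T} P_a = I and P_a (X ⊗ₖ I_k) P_a = 0 for all X ∈ S and all a; that is, they form a quantum b-fold coloring of (S, M) using c colors. -/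
open Matrix Kronecker BigOperators

noncomputable section

/-! The `Q_T` are projections summing to `1`, hence mutually orthogonal. Sums of subfamilies of
mutually orthogonal idempotents multiply like the corresponding index sets intersect, so the
`P_a` commute and are projections, and `∏_{a ∈ T} P_a` is the sum of the `Q_{T'}` with
`T ⊆ T'`, which for `|T'| = |T| = b` is just `Q_T`. Finally `P_a (X ⊗ 1) P_a` expands into
terms `Q_{T₁} (X ⊗ 1) Q_{T₂}` with `a ∈ T₁ ∩ T₂`, all of which vanish. -/

open scoped MatrixOrder ComplexOrder in
/-- For `t ≠ u` the positive matrices `(Q t Q u)ᴴ (Q t Q u)` sum to `Q u (1 - Q u) Q u = 0`,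
so each of them vanishes. -/
theorem Matrix.pairwise_mul_eq_zero_of_sum_eq_one {ι n 𝕜 : Type*} [RCLike 𝕜] [Fintype n]
    [DecidableEq n] [DecidableEq ι] {s : Finset ι} {Q : ι → Matrix n n 𝕜}
    (hQ : ∀ t ∈ s, IsStarProjection (Q t)) (hsum : ∑ t ∈ s, Q t = 1) :
    (s : Set ι).Pairwise fun t u => Q t * Q u = 0 := by
  intro t ht u hu htu
  have hsq : ∀ v ∈ s.erase u, star (Q v * Q u) * (Q v * Q u) = Q u * Q v * Q u := by
    intro v hv
    have hv := hQ v (Finset.mem_of_mem_erase hv)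
    rw [star_mul, (hQ u hu).isSelfAdjoint.star_eq, hv.isSelfAdjoint.star_eq, mul_assoc,
      ← mul_assoc (Q v), hv.isIdempotentElem.eq, mul_assoc]
  have hzero : ∑ v ∈ s.erase u, star (Q v * Q u) * (Q v * Q u) = 0 := by
    rw [Finset.sum_congr rfl hsq, ← Finset.sum_mul, ← Finset.mul_sum,
      Finset.sum_erase_eq_sub hu, hsum, (hQ u hu).mul_one_sub_self, zero_mul]
  have := (Finset.sum_eq_zero_iff_of_nonneg fun v _ => star_mul_self_nonneg (Q v * Q u)).1
    hzero t (Finset.mem_erase.2 ⟨htu, ht⟩)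
  exact conjTranspose_mul_self_eq_zero.1 this

section OrthogonalIdempotents

variable {ι R : Type*} [Semiring R] [DecidableEq ι] {s : Finset ι} {Q : ι → R}

theorem Finset.sum_filter_mul_sum_filter_of_orthogonal
    (horth : (s : Set ι).Pairwise fun t u => Q t * Q u = 0)
    (hidem : ∀ t ∈ s, IsIdempotentElem (Q t)) (p q : ι → Prop) [DecidablePred p]
    [DecidablePred q] :
    (∑ t ∈ s.filter p, Q t) * (∑ t ∈ s.filter q, Q t) =
      ∑ t ∈ s.filter fun t => p t ∧ q t, Q t := by
  have hterm : ∀ t ∈ s.filter p, ∀ u ∈ s.filter q,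
      Q t * Q u = if t = u then Q t else 0 := by
    intro t ht u hu
    split_ifs with htu
    · rw [← htu, (hidem t (Finset.mem_filter.1 ht).1).eq]
    · exact horth (Finset.mem_filter.1 ht).1 (Finset.mem_filter.1 hu).1 htu
  rw [Finset.sum_mul_sum, Finset.sum_congr rfl fun t ht => Finset.sum_congr rfl (hterm t ht)]
  simp only [Finset.sum_ite_eq, Finset.sum_ite_mem, Finset.filter_and]

theorem List.prod_map_sum_filter_of_orthogonal {α : Type*}
    (horth : (s : Set ι).Pairwise fun t u => Q t * Q u = 0)
    (hidem : ∀ t ∈ s, IsIdempotentElem (Q t)) (hsum : ∑ t ∈ s, Q t = 1)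
    (p : α → ι → Prop) [∀ a, DecidablePred (p a)] (l : List α) :
    (l.map fun a => ∑ t ∈ s.filter (p a), Q t).prod =
      ∑ t ∈ s.filter fun t => ∀ a ∈ l, p a t, Q t := by
  induction l with
  | nil => simpa using hsum.symm
  | cons a l ih =>
    rw [List.map_cons, List.prod_cons, ih,
      Finset.sum_filter_mul_sum_filter_of_orthogonal horth hidem]
    simp only [List.forall_mem_cons]

theorem finsetProd_sum_filter_mem_of_orthogonal {c : ℕ} {s : Finset (Finset (Fin c))}
    {Q : Finset (Fin c) → R} (horth : (s : Set (Finset (Fin c))).Pairwise fun t u => Q t * Q u = 0)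
    (hidem : ∀ t ∈ s, IsIdempotentElem (Q t)) (hsum : ∑ t ∈ s, Q t = 1) (T : Finset (Fin c)) :
    finsetProd (fun a => ∑ t ∈ s.filter (a ∈ ·), Q t) T = ∑ t ∈ s.filter (T ⊆ ·), Q t := by
  rw [finsetProd, List.prod_map_sum_filter_of_orthogonal horth hidem hsum]
  congr 1
  ext t
  simp only [Finset.mem_filter, Finset.mem_sort, Finset.subset_iff]

end OrthogonalIdempotents

theorem Finset.filter_superset_powersetCard {α : Type*} [DecidableEq α] {b : ℕ} {U T : Finset α}
    (hT : T ∈ U.powersetCard b) : (U.powersetCard b).filter (T ⊆ ·) = {T} := by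
  ext T'
  simp only [Finset.mem_filter, Finset.mem_singleton]
  constructor
  · rintro ⟨hT', hsub⟩
    exact (Finset.eq_of_subset_of_card_le hsub
      ((Finset.mem_powersetCard.1 hT').2.trans (Finset.mem_powersetCard.1 hT).2.symm).le).symm
  · rintro rfl
    exact ⟨hT, subset_rfl⟩

theorem pvm_to_qbFold_general {n : ℕ}
    (S : Submodule ℂ (Matrix (Fin n) (Fin n) ℂ))
    (M : StarSubalgebra ℂ (Matrix (Fin n) (Fin n) ℂ))
    (b c k : ℕ)
    (Q : Finset (Fin c) → Matrix (Fin n × Fin k) (Fin n × Fin k) ℂ)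
    (hmem : ∀ T ∈ Finset.univ.powersetCard b,
      Q T ∈ tensorSpan (M : Set (Matrix (Fin n) (Fin n) ℂ))
        (Set.univ : Set (Matrix (Fin k) (Fin k) ℂ)))
    (hsa : ∀ T ∈ Finset.univ.powersetCard b, (Q T)ᴴ = Q T)
    (hidem : ∀ T ∈ Finset.univ.powersetCard b, Q T * Q T = Q T)
    (hsum : (∑ T ∈ Finset.univ.powersetCard b, Q T) = 1)
    (horth : ∀ X ∈ S, ∀ T₁ ∈ Finset.univ.powersetCard b, ∀ T₂ ∈ Finset.univ.powersetCard b,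
      (T₁ ∩ T₂).Nonempty → Q T₁ * (X ⊗ₖ (1 : Matrix (Fin k) (Fin k) ℂ)) * Q T₂ = 0) :
    IsQBFoldColoring S (M : Set (Matrix (Fin n) (Fin n) ℂ)) b
      (fun a => ∑ T ∈ (Finset.univ.powersetCard b).filter (fun T => a ∈ T), Q T) := by
  have hQQ := Matrix.pairwise_mul_eq_zero_of_sum_eq_one
    (fun T hT => ⟨hidem T hT, hsa T hT⟩) hsum
  have hmul := Finset.sum_filter_mul_sum_filter_of_orthogonal hQQ hidem
  refine ⟨?_, ?_, ?_, ?_, ?_, ?_⟩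
  · exact fun a => Submodule.sum_mem _ fun T hT => hmem T (Finset.mem_filter.1 hT).1
  · intro a a'
    simp only [hmul, and_comm]
  · intro a
    simp only [conjTranspose_sum]
    exact Finset.sum_congr rfl fun T hT => hsa T (Finset.mem_filter.1 hT).1
  · intro a
    simp only [hmul, and_self]
  · rw [← hsum]
    refine Finset.sum_congr rfl fun T hT => ?_
    rw [finsetProd_sum_filter_mem_of_orthogonal hQQ hidem hsum,
      Finset.filter_superset_powersetCard hT, Finset.sum_singleton]
  · intro X hX a
    simp only [Finset.sum_mul, Finset.mul_sum]
    refine Finset.sum_eq_zero fun T₂ hT₂ => Finset.sum_eq_zero fun T₁ hT₁ => ?_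
    obtain ⟨hT₁, ha₁⟩ := Finset.mem_filter.1 hT₁
    obtain ⟨hT₂, ha₂⟩ := Finset.mem_filter.1 hT₂
    exact horth X hX T₁ hT₁ T₂ hT₂ ⟨a, Finset.mem_inter.2 ⟨ha₁, ha₂⟩⟩

theorem pvm_to_qbFold {n : ℕ}
    (S : Submodule ℂ (Matrix (Fin n) (Fin n) ℂ))
    (M : StarSubalgebra ℂ (Matrix (Fin n) (Fin n) ℂ))
    (hQG : IsQuantumGraph S (M : Set (Matrix (Fin n) (Fin n) ℂ)))
    (b c k : ℕ) (hb : 1 ≤ b) (hc : 1 ≤ c) (hk : 1 ≤ k)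
    (Q : Finset (Fin c) → Matrix (Fin n × Fin k) (Fin n × Fin k) ℂ)
    (hmem : ∀ T ∈ Finset.univ.powersetCard b,
      Q T ∈ tensorSpan (M : Set (Matrix (Fin n) (Fin n) ℂ))
        (Set.univ : Set (Matrix (Fin k) (Fin k) ℂ)))
    (hsa : ∀ T ∈ Finset.univ.powersetCard b, (Q T)ᴴ = Q T)
    (hidem : ∀ T ∈ Finset.univ.powersetCard b, Q T * Q T = Q T)
    (hsum : (∑ T ∈ Finset.univ.powersetCard b, Q T) = 1)
    (horth : ∀ X ∈ S, ∀ T₁ ∈ Finset.univ.powersetCard b, ∀ T₂ ∈ Finset.univ.powersetCard b,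
      (T₁ ∩ T₂).Nonempty → Q T₁ * (X ⊗ₖ (1 : Matrix (Fin k) (Fin k) ℂ)) * Q T₂ = 0) :
    IsQBFoldColoring S (M : Set (Matrix (Fin n) (Fin n) ℂ)) b
      (fun a => ∑ T ∈ (Finset.univ.powersetCard b).filter (fun T => a ∈ T), Q T) :=
  pvm_to_qbFold_general S M b c k Q hmem hsa hidem hsum horth
end
end

section
/- Let G be a finite simple graph with vertex set V and associated quantum graph (S_G, D_V), and let b, c ≥ 1. Then G admits a classical b-fold coloring with c colors (an assignment to each vertex v of a b-element subset φ(v) ⊆ {1,…,c} such that φ(v) ∩ φ(w) = ∅ whenever v is adjacent to w) if and only if (S_G, D_V) admits a local b-fold coloring using c colors. Consequently the local b-fold chromatic number of (S_G, D_V) equals the classical b-fold chromatic number χ_b(G). -/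
open Matrix Kronecker BigOperators

noncomputable section

/-!
A diagonal projection is the indicator of a set of vertices, so a local coloring of
`(S_G, D_V)` is the same as a family of diagonal projections `P_a = diag(𝟙[a ∈ φ v])` for a
set-valued map `φ : V → Finset (Fin c)`. The `(v, v)` entry of `∑_{|T| = b} ∏_{a ∈ T} P_a`
counts the `b`-subsets of `φ v`, which is `C(|φ v|, b)`; it equals `1` exactly when `|φ v| = b`
because `b ≥ 1`. Finally `P_a E_{vw} P_a = 𝟙[a ∈ φ v ∩ φ w] E_{vw}`, so `P_a` kills `S_G` iff
the color sets at the ends of every edge are disjoint.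
-/

lemma finsetProd_eq_prod {β : Type*} [CommMonoid β] {c : ℕ} (P : Fin c → β) (T : Finset (Fin c)) :
    finsetProd P T = ∏ a ∈ T, P a := by
  rw [finsetProd, ← Finset.prod_map_toList]
  exact ((T.sort_perm_toList _).map P).prod_eq

lemma finsetProd_comp_monoidHom {β γ F : Type*} [Monoid β] [Monoid γ] [FunLike F β γ]
    [MonoidHomClass F β γ] (f : F) {c : ℕ} (P : Fin c → β) (T : Finset (Fin c)) :
    finsetProd (f ∘ P) T = f (finsetProd P T) := by
  rw [finsetProd, finsetProd, map_list_prod, List.map_map]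

lemma forall_mem_span_forall_mul_mul_eq_zero_iff {ι R A : Type*} [CommSemiring R] [Semiring A]
    [Algebra R A] (s : Set A) (p : ι → A) :
    (∀ x ∈ Submodule.span R s, ∀ i, p i * x * p i = 0) ↔ ∀ x ∈ s, ∀ i, p i * x * p i = 0 := by
  refine ⟨fun h x hx => h x (Submodule.subset_span hx), fun h x hx i => ?_⟩
  have hs : s ⊆ LinearMap.ker (LinearMap.mulLeftRight R (p i, p i)) := fun y hy => h y hy i
  exact Submodule.span_le.2 hs hx

open Finset in
lemma Finset.card_filter_subset_powersetCard {α : Type*} [Fintype α] [DecidableEq α]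
    (s : Finset α) (b : ℕ) :
    #{T ∈ univ.powersetCard b | T ⊆ s} = (#s).choose b := by
  rw [← card_powersetCard]
  congr 1
  ext T
  simp [and_comm]

lemma Matrix.diagonal_mul_single_mul_diagonal {n R : Type*} [DecidableEq n] [Fintype n]
    [CommSemiring R] (d : n → R) (v w : n) (r : R) :
    diagonal d * single v w r * diagonal d = single v w (d v * r * d w) := by
  ext i j
  rw [mul_diagonal, diagonal_mul, single_apply, single_apply]
  split_ifs with h
  · rw [h.1, h.2]
  · simp

lemma Matrix.single_eq_zero_iff {m n α : Type*} [DecidableEq m] [DecidableEq n] [Zero α]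
    (i : m) (j : n) (a : α) : single i j a = 0 ↔ a = 0 :=
  ⟨fun h => by simpa using congrFun (congrFun h i) j, fun h => h ▸ single_zero i j⟩

section ColorProjection

open Finset

variable {V : Type*} [Fintype V] [DecidableEq V] {c : ℕ}

def colorProjection (φ : V → Finset (Fin c)) (a : Fin c) : Matrix V V ℂ :=
  diagonal fun v => if a ∈ φ v then 1 else 0

lemma sum_finsetProd_colorProjection (φ : V → Finset (Fin c)) (b : ℕ) :
    ∑ T ∈ univ.powersetCard b, finsetProd (colorProjection φ) T
      = diagonal fun v => ((#(φ v)).choose b : ℂ) := by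
  have hφ : colorProjection φ
      = diagonalRingHom V ℂ ∘ fun a v => if a ∈ φ v then 1 else 0 := rfl
  simp_rw [hφ, finsetProd_comp_monoidHom, ← map_sum, finsetProd_eq_prod]
  refine congrArg diagonal (funext fun v => ?_)
  rw [← card_filter_subset_powersetCard, card_filter]
  push_cast
  simp only [Finset.sum_apply, Finset.prod_apply, Finset.prod_boole, subset_iff]
  congr!

lemma colorProjection_mul_single_mul_colorProjection (φ : V → Finset (Fin c)) (a : Fin c)
    (v w : V) :
    colorProjection φ a * single v w 1 * colorProjection φ a = 0 ↔ a ∉ φ v ∩ φ w := by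
  rw [colorProjection, diagonal_mul_single_mul_diagonal, single_eq_zero_iff, mem_inter]
  by_cases hv : a ∈ φ v <;> by_cases hw : a ∈ φ w <;> simp [hv, hw]

lemma forall_mem_graphSpan_forall_mul_mul_eq_zero_iff {ι : Type*} (G : SimpleGraph V)
    (p : ι → Matrix V V ℂ) :
    (∀ x ∈ graphSpan G, ∀ i, p i * x * p i = 0)
      ↔ ∀ v w, G.Adj v w → ∀ i, p i * single v w 1 * p i = 0 := by
  rw [graphSpan, forall_mem_span_forall_mul_mul_eq_zero_iff]
  exact ⟨fun h v w hvw => h _ ⟨v, w, hvw, rfl⟩, by rintro h _ ⟨v, w, hvw, rfl⟩; exact h v w hvw⟩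

lemma isLocalBFoldColoring_colorProjection_iff (G : SimpleGraph V) (φ : V → Finset (Fin c))
    (b : ℕ) :
    IsLocalBFoldColoring (graphSpan G) {A : Matrix V V ℂ | A.IsDiag} b (colorProjection φ)
      ↔ (∀ v, (#(φ v)).choose b = 1) ∧ ∀ v w, G.Adj v w → φ v ∩ φ w = ∅ := by
  have hdiag : ∀ a, (colorProjection φ a).IsDiag := fun a => isDiag_diagonal _
  have hcomm : ∀ a a', colorProjection φ a * colorProjection φ a'
      = colorProjection φ a' * colorProjection φ a := fun a a' => by
    simp only [colorProjection, diagonal_mul_diagonal, mul_comm]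
  have hherm : ∀ a, (colorProjection φ a)ᴴ = colorProjection φ a := fun a => by
    simp [colorProjection, apply_ite]
  have hidem : ∀ a, colorProjection φ a * colorProjection φ a = colorProjection φ a := fun a => by
    simp [colorProjection]
  simp only [IsLocalBFoldColoring, Set.mem_ofPred_eq, hdiag, hcomm, hherm, hidem, implies_true,
    true_and, sum_finsetProd_colorProjection, diagonal_eq_one, funext_iff, Pi.one_apply,
    Nat.cast_eq_one, forall_mem_graphSpan_forall_mul_mul_eq_zero_iff,
    colorProjection_mul_single_mul_colorProjection, eq_empty_iff_forall_notMem]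

lemma exists_colorProjection_eq {P : Fin c → Matrix V V ℂ} (hdiag : ∀ a, (P a).IsDiag)
    (hidem : ∀ a, IsIdempotentElem (P a)) : ∃ φ : V → Finset (Fin c), P = colorProjection φ := by
  refine ⟨fun v => {a | P a v v = 1}, funext fun a => ?_⟩
  have hP : P a = diagonal (P a).diag := ((isDiag_iff_diagonal_diag _).1 (hdiag a)).symm
  have hentry : ∀ v, IsIdempotentElem (P a v v) := fun v => by
    have h := hidem a
    rw [IsIdempotentElem, hP, diagonal_mul_diagonal] at h
    exact congrFun (diagonal_injective h) v
  rw [hP, colorProjection]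
  refine congrArg diagonal (funext fun v => ?_)
  rcases IsIdempotentElem.iff_eq_zero_or_one.1 (hentry v) with h | h <;> simp [h]

theorem exists_bFoldColoring_iff_hasLocalBFoldColoring (G : SimpleGraph V) {b : ℕ} (hb : 1 ≤ b)
    (c : ℕ) :
    (∃ φ : V → Finset (Fin c), (∀ v, #(φ v) = b) ∧ ∀ v w, G.Adj v w → φ v ∩ φ w = ∅)
      ↔ HasLocalBFoldColoring (graphSpan G) {A : Matrix V V ℂ | A.IsDiag} b c := by
  have hchoose : ∀ n, n.choose b = 1 ↔ n = b := fun n => by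
    rw [Nat.choose_eq_one_iff]
    omega
  constructor
  · rintro ⟨φ, hcard, hadj⟩
    exact ⟨colorProjection φ, (isLocalBFoldColoring_colorProjection_iff G φ b).2
      ⟨fun v => (hchoose _).2 (hcard v), hadj⟩⟩
  · rintro ⟨P, hP⟩
    obtain ⟨φ, rfl⟩ := exists_colorProjection_eq hP.1 hP.2.2.2.1
    obtain ⟨hcard, hadj⟩ := (isLocalBFoldColoring_colorProjection_iff G φ b).1 hP
    exact ⟨φ, fun v => (hchoose _).1 (hcard v), hadj⟩

end ColorProjection

theorem classical_bfold_eq_local_bfold_general {V : Type*} [Fintype V] [DecidableEq V]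
    (G : SimpleGraph V) (b c : ℕ) (hb : 1 ≤ b) :
    ((∃ φ : V → Finset (Fin c), (∀ v, (φ v).card = b) ∧
        ∀ v w, G.Adj v w → φ v ∩ φ w = ∅)
      ↔ HasLocalBFoldColoring (graphSpan G) {A : Matrix V V ℂ | A.IsDiag} b c)
    ∧ localBChrom (graphSpan G) {A : Matrix V V ℂ | A.IsDiag} b
        = ⨅ (c' : ℕ) (_ : ∃ φ : V → Finset (Fin c'), (∀ v, (φ v).card = b) ∧
            ∀ v w, G.Adj v w → φ v ∩ φ w = ∅), (c' : ℕ∞) := by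
  refine ⟨exists_bFoldColoring_iff_hasLocalBFoldColoring G hb c, ?_⟩
  simp only [localBChrom, exists_bFoldColoring_iff_hasLocalBFoldColoring G hb]

theorem classical_bfold_eq_local_bfold {V : Type*} [Fintype V] [DecidableEq V]
    (G : SimpleGraph V) (b c : ℕ) (hb : 1 ≤ b) (hc : 1 ≤ c) :
    ((∃ φ : V → Finset (Fin c), (∀ v, (φ v).card = b) ∧
        ∀ v w, G.Adj v w → φ v ∩ φ w = ∅)
      ↔ HasLocalBFoldColoring (graphSpan G) {A : Matrix V V ℂ | A.IsDiag} b c)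
    ∧ localBChrom (graphSpan G) {A : Matrix V V ℂ | A.IsDiag} b
        = ⨅ (c' : ℕ) (_ : ∃ φ : V → Finset (Fin c'), (∀ v, (φ v).card = b) ∧
            ∀ v w, G.Adj v w → φ v ∩ φ w = ∅), (c' : ℕ∞) :=
  classical_bfold_eq_local_bfold_general G b c hb

end
end

section
/- Let (S, M) be a quantum graph on M_n(ℂ) and let b ≥ 2 and c ≥ 1. If (S, M) admits a quantum b-fold coloring using c colors, then (S, M) admits a quantum (b−1)-fold coloring using c−1 colors. Consequently, whenever χ_{b,q}(S, M) is finite, χ_{b−1,q}(S, M) < χ_{b,q}(S, M). -/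
open Matrix Kronecker BigOperators

noncomputable section

/-!
All computations take place in the commutative ring generated by the commuting projections
`P_0, …, P_c`. There every element is determined by its products with the atoms
`∏_{a ∈ B} P_a ∏_{a ∉ B} (1 - P_a)`, which sum to `1`. Multiplying the `b`-fold condition by the
atom of `B` gives `atom B = C(#B, b) • atom B`, so by torsion-freeness only atoms with `#B = b`
survive. Put `Q_a = P_a (1 - ∏_{x > a} (1 - P_x))`: on the atom of `B` it keeps the colour `a`
exactly when `a ∈ B` is not the largest element of `B`. Hence every surviving atom sees exactly
`b - 1` of the `Q_a`, and `Q_c = 0`, so `Q_0, …, Q_{c-1}` is a `(b - 1)`-fold colouring with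
one colour fewer. Since `Q_a = P_a U` with `U` commuting with `P_a`, the relation
`P_a (X ⊗ 1) P_a = 0` passes to `Q_a`.
-/

open Finset

namespace Idempotents

section IndicatorAction

-- The decidability instances are found by unification: at the use sites below they come from
-- `Fintype` rather than from `Finset`, and instance search would pick different ones.
variable {R : Type*} [CommRing R] {e x y : R} {P Q : Prop} {_ : Decidable P} {_ : Decidable Q}

lemma mul_mul_eq_ite (hx : x * e = if P then e else 0) (hy : y * e = if Q then e else 0) :
    x * y * e = if P ∧ Q then e else 0 := by
  rw [mul_assoc, hy]
  split_ifs <;> simp_all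

lemma one_sub_mul_eq_ite (hx : x * e = if P then e else 0) :
    (1 - x) * e = if ¬P then e else 0 := by
  rw [sub_mul, one_mul, hx]
  split_ifs <;> simp_all

lemma prod_mul_eq_ite {ι : Type*} {f : ι → R} {P : ι → Prop} [DecidablePred P] (s : Finset ι)
    (h : ∀ a ∈ s, f a * e = if P a then e else 0) :
    (∏ a ∈ s, f a) * e = if ∀ a ∈ s, P a then e else 0 := by
  classical
  induction s using Finset.induction_on with
  | empty => simp
  | insert a s ha ih =>
    rw [prod_insert ha, mul_mul_eq_ite (h a (mem_insert_self a s))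
      (ih fun b hb => h b (mem_insert_of_mem hb))]
    simp only [forall_mem_insert]

lemma sum_powersetCard_prod_mul_eq_choose_nsmul {ι : Type*} [Fintype ι] {f : ι → R}
    (K : Finset ι) [DecidablePred (· ∈ K)] (hf : ∀ a, f a * e = if a ∈ K then e else 0)
    (m : ℕ) :
    (∑ T ∈ powersetCard m univ, ∏ a ∈ T, f a) * e = (#K).choose m • e := by
  simp_rw [sum_mul, prod_mul_eq_ite _ fun a _ => hf a, sum_ite, sum_const_zero, add_zero,
    sum_const, ← card_powersetCard]
  congr 2
  ext T
  simp [mem_powersetCard, subset_iff, and_comm]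

end IndicatorAction

section Atoms

variable {R ι : Type*} [CommRing R] [Fintype ι] [DecidableEq ι] (p : ι → R)

def atom (B : Finset ι) : R := (∏ a ∈ B, p a) * ∏ a ∈ Bᶜ, (1 - p a)

lemma sum_atom : ∑ B, atom p B = 1 := by
  simpa [atom] using (Fintype.prod_add p (1 - p ·)).symm

variable {p} (hp : ∀ a, IsIdempotentElem (p a))
include hp

lemma mul_atom (a : ι) (B : Finset ι) : p a * atom p B = if a ∈ B then atom p B else 0 := by
  split_ifs with ha
  · rw [atom, ← mul_prod_erase B p ha, ← mul_assoc, ← mul_assoc, (hp a).eq]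
  · rw [atom, ← mul_prod_erase Bᶜ (1 - p ·) (mem_compl.2 ha), mul_left_comm, ← mul_assoc (p a),
      (hp a).mul_one_sub_self, zero_mul, mul_zero]

lemma one_sub_mul_atom (a : ι) (B : Finset ι) :
    (1 - p a) * atom p B = if a ∉ B then atom p B else 0 :=
  one_sub_mul_eq_ite (mul_atom hp a B)

lemma atom_eq_zero_of_card_ne [IsAddTorsionFree R] {b : ℕ}
    (h : ∑ T ∈ powersetCard (b + 1) univ, ∏ a ∈ T, p a = 1) {B : Finset ι} (hB : #B ≠ b + 1) :
    atom p B = 0 := by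
  have hN : (#B).choose (b + 1) ≠ 1 := by rw [Ne, Nat.choose_eq_one_iff]; omega
  have hcount := sum_powersetCard_prod_mul_eq_choose_nsmul B (mul_atom hp · B) (b + 1)
  rw [h, one_mul] at hcount
  have hz : (((#B).choose (b + 1) : ℤ) - 1) • atom p B = 0 := by
    rw [sub_smul, one_smul, natCast_zsmul, ← hcount, sub_self]
  exact (smul_eq_zero.1 hz).resolve_left (sub_ne_zero.2 (by exact_mod_cast hN))

end Atoms

section DropMax

variable {R ι : Type*} [CommRing R] [LinearOrder ι]

def eraseMax (B : Finset ι) : Finset ι := {a ∈ B | ∃ x ∈ B, a < x}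

lemma eraseMax_eq_erase_max' {B : Finset ι} (hB : B.Nonempty) :
    eraseMax B = B.erase (B.max' hB) := by
  ext a
  simp only [eraseMax, mem_filter, mem_erase]
  constructor
  · rintro ⟨ha, x, hx, hax⟩
    exact ⟨(hax.trans_le (B.le_max' x hx)).ne, ha⟩
  · rintro ⟨hne, ha⟩
    exact ⟨ha, _, B.max'_mem hB, (B.le_max' a ha).lt_of_ne hne⟩

lemma card_eraseMax {B : Finset ι} (hB : B.Nonempty) : #(eraseMax B) = #B - 1 := by
  rw [eraseMax_eq_erase_max' hB, card_erase_of_mem (B.max'_mem hB)]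

lemma notMem_eraseMax_of_isMax {a : ι} (ha : IsMax a) (B : Finset ι) : a ∉ eraseMax B := by
  simp [eraseMax, ha.not_lt]

variable [Fintype ι]

def dropMax (p : ι → R) (a : ι) : R := p a * (1 - ∏ x with a < x, (1 - p x))

variable {p : ι → R} (hp : ∀ a, IsIdempotentElem (p a))
include hp

lemma isIdempotentElem_dropMax (a : ι) : IsIdempotentElem (dropMax p a) :=
  (hp a).mul (prod_induction _ _ (fun _ _ => IsIdempotentElem.mul) .one
    fun x _ => (hp x).one_sub).one_sub

lemma dropMax_mul_atom (a : ι) (B : Finset ι) :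
    dropMax p a * atom p B = if a ∈ eraseMax B then atom p B else 0 := by
  rw [dropMax, mul_mul_eq_ite (mul_atom hp a B) (one_sub_mul_eq_ite
    (prod_mul_eq_ite _ fun x _ => one_sub_mul_atom hp x B))]
  simp only [eraseMax, mem_filter, mem_univ, true_and, not_forall, not_not, exists_prop,
    and_comm (a := _ < _)]

end DropMax

lemma card_preimage_castSucc_of_last_notMem {c : ℕ} {K : Finset (Fin (c + 1))}
    (h : Fin.last c ∉ K) : #(K.preimage Fin.castSucc (Fin.castSucc_injective c).injOn) = #K := by
  rw [card_preimage, filter_true_of_mem]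
  intro a ha
  exact Fin.exists_castSucc_eq.2 (ne_of_mem_of_not_mem ha h)

theorem sum_powersetCard_prod_dropMax_castSucc {R : Type*} [CommRing R] [IsAddTorsionFree R]
    {b c : ℕ} {p : Fin (c + 1) → R} (hp : ∀ a, IsIdempotentElem (p a))
    (h : ∑ T ∈ powersetCard (b + 1) univ, ∏ a ∈ T, p a = 1) :
    ∑ T ∈ powersetCard b univ, ∏ a ∈ T, dropMax p (Fin.castSucc a) = 1 := by
  set X := ∑ T ∈ powersetCard b univ, ∏ a ∈ T, dropMax p (Fin.castSucc a)
  have hX : ∀ B, X * atom p B = atom p B := by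
    intro B
    by_cases hB : #B = b + 1
    · rw [sum_powersetCard_prod_mul_eq_choose_nsmul
          ((eraseMax B).preimage _ (Fin.castSucc_injective c).injOn)
          fun a => by simp only [dropMax_mul_atom hp, mem_preimage],
        card_preimage_castSucc_of_last_notMem
          (notMem_eraseMax_of_isMax (fun x _ => Fin.le_last x) B),
        card_eraseMax (card_pos.1 (by omega)), hB, Nat.add_sub_cancel, Nat.choose_self, one_smul]
    · rw [atom_eq_zero_of_card_ne hp h hB, mul_zero]
  calc X = X * ∑ B, atom p B := by rw [sum_atom, mul_one]
    _ = ∑ B, atom p B := by rw [mul_sum]; exact sum_congr rfl fun B _ => hX B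
    _ = 1 := sum_atom p

end Idempotents

open Idempotents

section Matrices

variable {I J : Type*} [Fintype I] [Fintype J] [DecidableEq I] [DecidableEq J]

lemma tensorSpan_mul_mem {V : Set (Matrix I I ℂ)} (hV : ∀ v ∈ V, ∀ w ∈ V, v * w ∈ V)
    {x y : Matrix (I × J) (I × J) ℂ} (hx : x ∈ tensorSpan V Set.univ)
    (hy : y ∈ tensorSpan V Set.univ) : x * y ∈ tensorSpan V Set.univ := by
  have hle : tensorSpan V Set.univ * tensorSpan V Set.univ ≤
      tensorSpan V (Set.univ : Set (Matrix J J ℂ)) := by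
    rw [tensorSpan, Submodule.span_mul_span, Submodule.span_le]
    rintro _ ⟨_, ⟨v, hv, w, -, rfl⟩, _, ⟨v', hv', w', -, rfl⟩, rfl⟩
    exact Submodule.subset_span
      ⟨v * v', hV v hv v' hv', w * w', trivial, (mul_kronecker_mul ..).symm⟩
  exact hle (Submodule.mul_mem_mul hx hy)

lemma mem_tensorSpan_of_mem_closure {M : Submonoid (Matrix I I ℂ)} {s : Set (Matrix (I × J) (I × J) ℂ)}
    (hs : s ⊆ tensorSpan (M : Set (Matrix I I ℂ)) (Set.univ : Set (Matrix J J ℂ)))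
    {x : Matrix (I × J) (I × J) ℂ} (hx : x ∈ Subring.closure s) :
    x ∈ tensorSpan (M : Set (Matrix I I ℂ)) Set.univ :=
  let T := (tensorSpan (M : Set (Matrix I I ℂ)) (Set.univ : Set (Matrix J J ℂ))).toSubalgebra
    (Submodule.subset_span ⟨1, M.one_mem, 1, trivial, one_kronecker_one.symm⟩)
    fun _ _ => tensorSpan_mul_mem fun _ hv _ hw => M.mul_mem hv hw
  Subring.closure_le (t := T.toSubring) |>.2 hs hx

end Matrices

lemma isSelfAdjoint_of_mem_closure {A : Type*} [Ring A] [StarRing A] {s : Set A}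
    (hcomm : ∀ x ∈ s, ∀ y ∈ s, Commute x y) (hs : ∀ x ∈ s, IsSelfAdjoint x) {x : A}
    (hx : x ∈ Subring.closure s) : IsSelfAdjoint x := by
  have := Subring.isMulCommutative_closure hcomm
  induction hx using Subring.closure_induction with
  | mem x hx => exact hs x hx
  | zero => exact .zero _
  | one => exact .one _
  | add x y _ _ hx hy => exact hx.add hy
  | neg x _ hx => exact hx.neg
  | mul x y hxs hys hx hy =>
    exact (hx.commute_iff hy).1
      (congrArg Subtype.val (mul_comm' (⟨x, hxs⟩ : Subring.closure s) ⟨y, hys⟩))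

lemma mul_mul_mul_eq_zero_of_commute {A : Type*} [Ring A] {e u x : A} (hu : Commute e u)
    (h : e * x * e = 0) : e * u * x * (e * u) = 0 :=
  calc e * u * x * (e * u) = u * e * x * (e * u) := by rw [hu.eq]
    _ = u * (e * x * e) * u := by simp only [mul_assoc]
    _ = 0 := by rw [h, mul_zero, zero_mul]

lemma finsetProd_map {β R : Type*} [Monoid β] [CommMonoid R] {c : ℕ} (f : R →* β)
    (g : Fin c → R) (T : Finset (Fin c)) : finsetProd (fun a => f (g a)) T = f (∏ a ∈ T, g a) := by
  rw [finsetProd, show (fun a => f (g a)) = f ∘ g from rfl, ← List.map_map, ← map_list_prod,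
    prod_eq_multiset_prod, ← sort_eq T (· ≤ ·), Multiset.map_coe, Multiset.prod_coe]

open scoped IsMulCommutative in
theorem IsQBFoldColoring.exists_pred {I : Type*} [Fintype I] [DecidableEq I]
    {S : Submodule ℂ (Matrix I I ℂ)} {M : Submonoid (Matrix I I ℂ)} {b c k : ℕ}
    {P : Fin (c + 1) → Matrix (I × Fin k) (I × Fin k) ℂ}
    (hP : IsQBFoldColoring S (M : Set (Matrix I I ℂ)) (b + 1) P) :
    ∃ Q : Fin c → Matrix (I × Fin k) (I × Fin k) ℂ,
      IsQBFoldColoring S (M : Set (Matrix I I ℂ)) b Q := by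
  obtain ⟨hmem, hcomm, hsa, hidem, hsum, hzero⟩ := hP
  have hcomm' : ∀ x ∈ Set.range P, ∀ y ∈ Set.range P, Commute x y := by
    rintro _ ⟨a, rfl⟩ _ ⟨a', rfl⟩
    exact hcomm a a'
  let R := Subring.closure (Set.range P)
  have := Subring.isMulCommutative_closure hcomm'
  have : IsAddTorsionFree (Matrix (I × Fin k) (I × Fin k) ℂ) := .of_module_rat _
  have : IsAddTorsionFree R := Subtype.val_injective.isAddTorsionFree R.subtype.toAddMonoidHom
  let p : Fin (c + 1) → R := fun a => ⟨P a, Subring.subset_closure ⟨a, rfl⟩⟩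
  have hp : ∀ a, IsIdempotentElem (p a) := fun a => Subtype.ext (hidem a)
  refine ⟨fun a => (dropMax p a.castSucc : R), fun a => ?_, fun a a' => ?_, fun a => ?_,
    fun a => ?_, ?_, fun X hX a => ?_⟩
  · exact mem_tensorSpan_of_mem_closure (by rintro _ ⟨a, rfl⟩; exact hmem a) (dropMax p _).2
  · exact congrArg Subtype.val (mul_comm (dropMax p _) (dropMax p _))
  · exact isSelfAdjoint_of_mem_closure hcomm' (by rintro _ ⟨a, rfl⟩; exact hsa a) (dropMax p _).2
  · exact congrArg Subtype.val (isIdempotentElem_dropMax hp _)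
  · have hval : ∀ {m : ℕ} (q : Fin m → R) (T : Finset (Fin m)),
        finsetProd (fun a => (q a : Matrix (I × Fin k) (I × Fin k) ℂ)) T = ↑(∏ a ∈ T, q a) :=
      finsetProd_map R.subtype.toMonoidHom
    have hsum' : ∑ T ∈ powersetCard (b + 1) univ, ∏ a ∈ T, p a = 1 := by
      apply Subtype.val_injective
      simpa [← hval] using hsum
    simpa [hval] using congrArg Subtype.val (sum_powersetCard_prod_dropMax_castSucc hp hsum')
  · have hu := mul_comm (p a.castSucc) (1 - ∏ x with a.castSucc < x, (1 - p x))
    exact mul_mul_mul_eq_zero_of_commute (congrArg Subtype.val hu) (hzero X hX _)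

theorem HasQBFoldColoring.of_succ {I : Type*} [Fintype I] [DecidableEq I]
    {S : Submodule ℂ (Matrix I I ℂ)} {M : Submonoid (Matrix I I ℂ)} {b c : ℕ}
    (h : HasQBFoldColoring S (M : Set (Matrix I I ℂ)) (b + 1) (c + 1)) :
    HasQBFoldColoring S (M : Set (Matrix I I ℂ)) b c :=
  let ⟨k, hk, _, hP⟩ := h
  let ⟨Q, hQ⟩ := IsQBFoldColoring.exists_pred hP
  ⟨k, hk, Q, hQ⟩

theorem HasQBFoldColoring.pos {I : Type*} [Fintype I] [DecidableEq I] [Nonempty I]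
    {S : Submodule ℂ (Matrix I I ℂ)} {M : Set (Matrix I I ℂ)} {b c : ℕ} (hb : b ≠ 0)
    (h : HasQBFoldColoring S M b c) : 0 < c := by
  obtain ⟨k, hk, P, -, -, -, -, hsum, -⟩ := h
  rw [Nat.pos_iff_ne_zero]
  rintro rfl
  have : Nonempty (Fin k) := ⟨⟨0, hk⟩⟩
  rw [powersetCard_eq_empty.2 (by simpa [Nat.pos_iff_ne_zero] using hb), sum_empty] at hsum
  exact zero_ne_one hsum

lemma ENat.iInf_natCast_lt_of_forall_pred {A B : ℕ → Prop} (hpos : ∀ c, A c → 0 < c)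
    (hpred : ∀ c, A c → B (c - 1)) (hA : ⨅ (c : ℕ) (_ : A c), (c : ℕ∞) ≠ ⊤) :
    ⨅ (c : ℕ) (_ : B c), (c : ℕ∞) < ⨅ (c : ℕ) (_ : A c), (c : ℕ∞) := by
  rw [iInf_subtype'] at hA
  have := ENat.iInf_natCast_ne_top.1 hA
  obtain ⟨⟨c, hc⟩, hmin⟩ := ENat.exists_eq_iInf fun c : {c // A c} => ((c : ℕ) : ℕ∞)
  calc ⨅ (c : ℕ) (_ : B c), (c : ℕ∞) ≤ ((c - 1 : ℕ) : ℕ∞) := iInf₂_le _ (hpred c hc)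
    _ < c := by exact_mod_cast Nat.sub_lt (hpos c hc) one_pos
    _ = ⨅ (c : ℕ) (_ : A c), (c : ℕ∞) := by rw [iInf_subtype']; exact hmin

theorem qbChrom_pred_general {n : ℕ} (hn : 1 ≤ n)
    (S : Submodule ℂ (Matrix (Fin n) (Fin n) ℂ))
    (M : StarSubalgebra ℂ (Matrix (Fin n) (Fin n) ℂ))
    (b : ℕ) (hb : 2 ≤ b) :
    (∀ c : ℕ, 1 ≤ c →
      HasQBFoldColoring S (M : Set (Matrix (Fin n) (Fin n) ℂ)) b c →
        HasQBFoldColoring S (M : Set (Matrix (Fin n) (Fin n) ℂ)) (b - 1) (c - 1))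
    ∧ (qbChrom S (M : Set (Matrix (Fin n) (Fin n) ℂ)) b ≠ ⊤ →
        qbChrom S (M : Set (Matrix (Fin n) (Fin n) ℂ)) (b - 1)
          < qbChrom S (M : Set (Matrix (Fin n) (Fin n) ℂ)) b) := by
  have : Nonempty (Fin n) := ⟨⟨0, hn⟩⟩
  obtain ⟨b, rfl⟩ : ∃ b', b = b' + 1 := ⟨b - 1, by omega⟩
  have hstep : ∀ c, 1 ≤ c →
      HasQBFoldColoring S (M : Set (Matrix (Fin n) (Fin n) ℂ)) (b + 1) c →
        HasQBFoldColoring S (M : Set (Matrix (Fin n) (Fin n) ℂ)) (b + 1 - 1) (c - 1) := by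
    rintro c hc h
    obtain ⟨c, rfl⟩ : ∃ c', c = c' + 1 := ⟨c - 1, by omega⟩
    exact HasQBFoldColoring.of_succ (M := M.toSubmonoid) h
  have hpos (c) (h : HasQBFoldColoring S (M : Set (Matrix (Fin n) (Fin n) ℂ)) (b + 1) c) :
      0 < c :=
    h.pos b.succ_ne_zero
  exact ⟨hstep, ENat.iInf_natCast_lt_of_forall_pred hpos fun c h => hstep c (hpos c h) h⟩

theorem qbChrom_pred {n : ℕ} (hn : 1 ≤ n)
    (S : Submodule ℂ (Matrix (Fin n) (Fin n) ℂ))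
    (M : StarSubalgebra ℂ (Matrix (Fin n) (Fin n) ℂ))
    (hQG : IsQuantumGraph S (M : Set (Matrix (Fin n) (Fin n) ℂ)))
    (b : ℕ) (hb : 2 ≤ b) :
    (∀ c : ℕ, 1 ≤ c →
      HasQBFoldColoring S (M : Set (Matrix (Fin n) (Fin n) ℂ)) b c →
        HasQBFoldColoring S (M : Set (Matrix (Fin n) (Fin n) ℂ)) (b - 1) (c - 1))
    ∧ (qbChrom S (M : Set (Matrix (Fin n) (Fin n) ℂ)) b ≠ ⊤ →
        qbChrom S (M : Set (Matrix (Fin n) (Fin n) ℂ)) (b - 1)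
          < qbChrom S (M : Set (Matrix (Fin n) (Fin n) ℂ)) b) :=
  qbChrom_pred_general hn S M b hb
end
end

section
/- (Hedetniemi-type bound) Let (S_G, M_G) be a quantum graph on M_n(ℂ) and (S_H, M_H) a quantum graph on M_m(ℂ), and let their categorical product be the quantum graph (S_K, M_K) on M_{nm}(ℂ) with M_K = M_G ⊗ M_H and S_K = S_G ⊗ S_H. Then χ_q(S_K, M_K) ≤ min{χ_q(S_G, M_G), χ_q(S_H, M_H)}; equivalently, every quantum c-coloring of either factor yields a quantum c-coloring of the categorical product. -/
open Matrix Kronecker BigOperators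

noncomputable section

/-!
Ampliating a quantum coloring `{P_a}` of one factor by the identity of the other factor gives a
quantum coloring of the categorical product. Ampliation `X ↦ X ⊗ 1` is a unital ⋆-homomorphism, so
the `P_a` stay projections summing to `1`; it maps `M_G ⊗ M_k(ℂ)` into `(M_G ⊗ M_H) ⊗ M_k(ℂ)`
because `1 ∈ M_H`; and on a generator `X ⊗ Y` of `S_G ⊗ S_H` the edge condition becomes
`(P_a (X ⊗ 1) P_a) ⊗ Y = 0`, which holds since `X ∈ S_G`.
-/

section Ampliation

variable {I J L : Type*} [Fintype I] [Fintype J] [Fintype L]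
  [DecidableEq I] [DecidableEq J] [DecidableEq L]

def ampliation (e : I ≃ J × L) : Matrix J J ℂ →ₐ[ℂ] Matrix I I ℂ :=
  ((reindexAlgEquiv ℂ ℂ e.symm).toAlgHom.comp (kroneckerAlgEquiv J L ℂ).toAlgHom).comp
    Algebra.TensorProduct.includeLeft

@[simp]
theorem ampliation_apply (e : I ≃ J × L) (X : Matrix J J ℂ) :
    ampliation e X = (X ⊗ₖ (1 : Matrix L L ℂ)).submatrix e e := by
  simp [ampliation]

theorem ampliation_conjTranspose (e : I ≃ J × L) (X : Matrix J J ℂ) :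
    ampliation e Xᴴ = (ampliation e X)ᴴ := by
  simp [conjTranspose_submatrix, conjTranspose_kronecker]

end Ampliation

section Transfer

variable {I I' L : Type*} [Fintype I] [Fintype I'] [Fintype L]
  [DecidableEq I] [DecidableEq I'] [DecidableEq L] {c k : ℕ}

theorem IsQColoring.map_ampliation {S : Submodule ℂ (Matrix I I ℂ)} {M : Set (Matrix I I ℂ)}
    {G' M' : Set (Matrix I' I' ℂ)} {P : Fin c → Matrix (I × Fin k) (I × Fin k) ℂ}
    (hP : IsQColoring S M P) (e : I' × Fin k ≃ (I × Fin k) × L)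
    (hM : ∀ v ∈ M, ∀ w : Matrix (Fin k) (Fin k) ℂ,
      ((v ⊗ₖ w) ⊗ₖ (1 : Matrix L L ℂ)).submatrix e e ∈ tensorSpan M' Set.univ)
    (hG : ∀ X' ∈ G', ∃ X ∈ S, ∃ Y : Matrix L L ℂ,
      X' ⊗ₖ (1 : Matrix (Fin k) (Fin k) ℂ) = ((X ⊗ₖ 1) ⊗ₖ Y).submatrix e e) :
    IsQColoring (Submodule.span ℂ G') M' fun a => ampliation e (P a) := by
  obtain ⟨hmem, hherm, hidem, hsum, hedge⟩ := hP
  refine ⟨fun a => ?_, fun a => ?_, fun a => ?_, ?_, fun X' hX' a => ?_⟩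
  · have hspan := Submodule.apply_mem_span_image_of_mem_span
      (ampliation e).toLinearMap (hmem a)
    refine Submodule.span_le.mpr ?_ hspan
    rintro _ ⟨_, ⟨v, hv, w, -, rfl⟩, rfl⟩
    simpa using hM v hv w
  · rw [← ampliation_conjTranspose, hherm]
  · rw [← map_mul, hidem]
  · rw [← map_sum, hsum, map_one]
  · beta_reduce
    induction hX' using Submodule.span_induction with
    | mem Z hZ =>
      obtain ⟨X, hX, Y, hXY⟩ := hG Z hZ
      -- `(P ⊗ 1) ((X ⊗ 1) ⊗ Y) (P ⊗ 1) = (P (X ⊗ 1) P) ⊗ Y`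
      rw [hXY, ampliation_apply, submatrix_mul_equiv, submatrix_mul_equiv,
        ← mul_kronecker_mul, ← mul_kronecker_mul, hedge X hX a, zero_kronecker]
      rfl
    | zero => simp
    | add x y _ _ hx hy => rw [add_kronecker, mul_add, add_mul, hx, hy, add_zero]
    | smul r x _ hx => rw [smul_kronecker, Matrix.mul_smul, Matrix.smul_mul, hx, smul_zero]

end Transfer

section CategoricalProduct

variable {I J : Type*} [Fintype I] [Fintype J] [DecidableEq I] [DecidableEq J] {c : ℕ}

theorem HasQColoring.tensorSpan_left {S : Submodule ℂ (Matrix I I ℂ)} {M : Set (Matrix I I ℂ)}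
    (S' : Set (Matrix J J ℂ)) {M' : Set (Matrix J J ℂ)} (h1 : (1 : Matrix J J ℂ) ∈ M')
    (h : HasQColoring S M c) :
    HasQColoring (tensorSpan (S : Set (Matrix I I ℂ)) S')
      (tensorSpan M M' : Set (Matrix (I × J) (I × J) ℂ)) c := by
  obtain ⟨k, hk, P, hP⟩ := h
  let e : (I × J) × Fin k ≃ (I × Fin k) × J :=
    (Equiv.prodAssoc I J _).trans
      (((Equiv.refl I).prodCongr (Equiv.prodComm J _)).trans (Equiv.prodAssoc I _ J).symm)
  refine ⟨k, hk, _, hP.map_ampliation e (fun v hv w => ?_) ?_⟩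
  · have hvw : ((v ⊗ₖ w) ⊗ₖ (1 : Matrix J J ℂ)).submatrix e e = (v ⊗ₖ 1) ⊗ₖ w := by
      ext ⟨⟨i, j⟩, s⟩ ⟨⟨i', j'⟩, s'⟩
      simp [e, mul_right_comm]
    rw [hvw]
    exact Submodule.subset_span ⟨_, Submodule.subset_span ⟨v, hv, 1, h1, rfl⟩, w, trivial, rfl⟩
  · rintro _ ⟨u, hu, v, -, rfl⟩
    refine ⟨u, hu, v, ?_⟩
    ext ⟨⟨i, j⟩, s⟩ ⟨⟨i', j'⟩, s'⟩
    simp [e, mul_right_comm]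

theorem HasQColoring.tensorSpan_right (S : Set (Matrix I I ℂ)) {M : Set (Matrix I I ℂ)}
    {S' : Submodule ℂ (Matrix J J ℂ)} {M' : Set (Matrix J J ℂ)} (h1 : (1 : Matrix I I ℂ) ∈ M)
    (h : HasQColoring S' M' c) :
    HasQColoring (tensorSpan S (S' : Set (Matrix J J ℂ)))
      (tensorSpan M M' : Set (Matrix (I × J) (I × J) ℂ)) c := by
  obtain ⟨k, hk, P, hP⟩ := h
  let e : (I × J) × Fin k ≃ (J × Fin k) × I :=
    (Equiv.prodAssoc I J _).trans (Equiv.prodComm I _)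
  refine ⟨k, hk, _, hP.map_ampliation e (fun v hv w => ?_) ?_⟩
  · have hvw : ((v ⊗ₖ w) ⊗ₖ (1 : Matrix I I ℂ)).submatrix e e = (1 ⊗ₖ v) ⊗ₖ w := by
      ext ⟨⟨i, j⟩, s⟩ ⟨⟨i', j'⟩, s'⟩
      simp [e, one_apply]
    rw [hvw]
    exact Submodule.subset_span ⟨_, Submodule.subset_span ⟨1, h1, v, hv, rfl⟩, w, trivial, rfl⟩
  · rintro _ ⟨u, hu, v, hv, rfl⟩
    refine ⟨v, hv, u, ?_⟩
    ext ⟨⟨i, j⟩, s⟩ ⟨⟨i', j'⟩, s'⟩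
    simp [e, one_apply, mul_comm]

end CategoricalProduct

theorem qChrom_le_of_forall_hasQColoring {I I' : Type*} [Fintype I] [Fintype I']
    [DecidableEq I] [DecidableEq I']
    {S : Submodule ℂ (Matrix I I ℂ)} {M : Set (Matrix I I ℂ)}
    {S' : Submodule ℂ (Matrix I' I' ℂ)} {M' : Set (Matrix I' I' ℂ)}
    (h : ∀ c, HasQColoring S M c → HasQColoring S' M' c) : qChrom S' M' ≤ qChrom S M :=
  le_iInf₂ fun c hc => iInf₂_le c (h c hc)

theorem hedetniemi_categorical_general {n m : ℕ}
    (SG : Submodule ℂ (Matrix (Fin n) (Fin n) ℂ))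
    (MG : StarSubalgebra ℂ (Matrix (Fin n) (Fin n) ℂ))
    (SH : Submodule ℂ (Matrix (Fin m) (Fin m) ℂ))
    (MH : StarSubalgebra ℂ (Matrix (Fin m) (Fin m) ℂ)) :
    qChrom (tensorSpan (SG : Set (Matrix (Fin n) (Fin n) ℂ)) (SH : Set (Matrix (Fin m) (Fin m) ℂ))) ((tensorSpan (MG : Set (Matrix (Fin n) (Fin n) ℂ)) (MH : Set (Matrix (Fin m) (Fin m) ℂ)) : Submodule ℂ (Matrix (Fin n × Fin m) (Fin n × Fin m) ℂ)) : Set (Matrix (Fin n × Fin m) (Fin n × Fin m) ℂ))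
      ≤ min (qChrom SG (MG : Set (Matrix (Fin n) (Fin n) ℂ))) (qChrom SH (MH : Set (Matrix (Fin m) (Fin m) ℂ)))
    ∧ (∀ c : ℕ, (HasQColoring SG (MG : Set (Matrix (Fin n) (Fin n) ℂ)) c ∨ HasQColoring SH (MH : Set (Matrix (Fin m) (Fin m) ℂ)) c) →
        HasQColoring (tensorSpan (SG : Set (Matrix (Fin n) (Fin n) ℂ)) (SH : Set (Matrix (Fin m) (Fin m) ℂ))) ((tensorSpan (MG : Set (Matrix (Fin n) (Fin n) ℂ)) (MH : Set (Matrix (Fin m) (Fin m) ℂ)) : Submodule ℂ (Matrix (Fin n × Fin m) (Fin n × Fin m) ℂ)) : Set (Matrix (Fin n × Fin m) (Fin n × Fin m) ℂ)) c) := by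
  have of_left := fun c (h : HasQColoring SG MG c) => h.tensorSpan_left SH (one_mem MH)
  have of_right := fun c (h : HasQColoring SH MH c) => h.tensorSpan_right SG (one_mem MG)
  exact ⟨le_min (qChrom_le_of_forall_hasQColoring of_left)
      (qChrom_le_of_forall_hasQColoring of_right), fun c => Or.rec (of_left c) (of_right c)⟩

theorem hedetniemi_categorical {n m : ℕ}
    (SG : Submodule ℂ (Matrix (Fin n) (Fin n) ℂ))
    (MG : StarSubalgebra ℂ (Matrix (Fin n) (Fin n) ℂ))
    (SH : Submodule ℂ (Matrix (Fin m) (Fin m) ℂ))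
    (MH : StarSubalgebra ℂ (Matrix (Fin m) (Fin m) ℂ))
    (hG : IsQuantumGraph SG (MG : Set (Matrix (Fin n) (Fin n) ℂ)))
    (hH : IsQuantumGraph SH (MH : Set (Matrix (Fin m) (Fin m) ℂ))) :
    qChrom (tensorSpan (SG : Set (Matrix (Fin n) (Fin n) ℂ)) (SH : Set (Matrix (Fin m) (Fin m) ℂ))) ((tensorSpan (MG : Set (Matrix (Fin n) (Fin n) ℂ)) (MH : Set (Matrix (Fin m) (Fin m) ℂ)) : Submodule ℂ (Matrix (Fin n × Fin m) (Fin n × Fin m) ℂ)) : Set (Matrix (Fin n × Fin m) (Fin n × Fin m) ℂ))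
      ≤ min (qChrom SG (MG : Set (Matrix (Fin n) (Fin n) ℂ))) (qChrom SH (MH : Set (Matrix (Fin m) (Fin m) ℂ)))
    ∧ (∀ c : ℕ, (HasQColoring SG (MG : Set (Matrix (Fin n) (Fin n) ℂ)) c ∨ HasQColoring SH (MH : Set (Matrix (Fin m) (Fin m) ℂ)) c) →
        HasQColoring (tensorSpan (SG : Set (Matrix (Fin n) (Fin n) ℂ)) (SH : Set (Matrix (Fin m) (Fin m) ℂ))) ((tensorSpan (MG : Set (Matrix (Fin n) (Fin n) ℂ)) (MH : Set (Matrix (Fin m) (Fin m) ℂ)) : Submodule ℂ (Matrix (Fin n × Fin m) (Fin n × Fin m) ℂ)) : Set (Matrix (Fin n × Fin m) (Fin n × Fin m) ℂ)) c) :=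
  hedetniemi_categorical_general SG MG SH MH
end
end

section
/- Let (S_G, M_G) be a quantum graph on M_n(ℂ) and (S_H, M_H) a quantum graph on M_m(ℂ), and let their lexicographic product be the quantum graph (S_K, M_K) on M_{nm}(ℂ) with M_K = M_G ⊗ M_H and S_K = S_G ⊗ M_m(ℂ) + M_G' ⊗ S_H. If (S_H, M_H) admits a quantum b-coloring and (S_G, M_G) admits a quantum b-fold coloring using c colors, then (S_K, M_K) admits a quantum c-coloring. Consequently, χ_q(S_K, M_K) ≤ χ_{b,q}(S_G, M_G) where b = χ_q(S_H, M_H). -/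
open Matrix Kronecker BigOperators

noncomputable section

/-!
The products `P_T = ∏_{a ∈ T} P_a` over the `b`-subsets `T` of colours of a quantum `b`-fold
colouring of `G` are projections summing to `1`, hence mutually orthogonal. Colour the
lexicographic product by `R_a = ∑_{T ∋ a} P_T ⊗ Q_{ι_T(a)}`, where `ι_T(a)` is the position of
`a` in `T` and `(Q_i)` is a quantum `b`-colouring of `H`: on the block `P_T`, the `b` colours of `T`
are handed out according to `Q`. An edge `X ⊗ Y` with `X ∈ S_G` is killed because
`P_a (X ⊗ 1) P_a = 0` and `a` lies in both blocks; an edge `X ⊗ Y` with `X ∈ M_G'` and `Y ∈ S_H`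
is killed because `X ⊗ 1` commutes with the `P_T`, so only diagonal blocks survive, and there
`Q_i (Y ⊗ 1) Q_i = 0`.
-/

open Finset
open scoped ComplexOrder

section Projections

variable {d R : Type*} [Fintype d] [DecidableEq d] [CommRing R] [PartialOrder R] [StarRing R]
  [StarOrderedRing R] [NoZeroDivisors R]

theorem Matrix.mul_eq_zero_of_sum_eq_one {ι : Type*} {s : Finset ι} {p : ι → Matrix d d R}
    (hsa : ∀ i ∈ s, (p i)ᴴ = p i) (hidem : ∀ i ∈ s, p i * p i = p i) (hsum : ∑ i ∈ s, p i = 1)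
    {i j : ι} (hi : i ∈ s) (hj : j ∈ s) (hij : i ≠ j) : p i * p j = 0 := by
  classical
  have hgram : ∀ k ∈ s, (p k * p j)ᴴ * (p k * p j) = p j * p k * p j := by
    intro k hk
    rw [conjTranspose_mul, hsa j hj, hsa k hk, mul_assoc, ← mul_assoc (p k), hidem k hk,
      mul_assoc]
  have hoff : ∑ k ∈ s.erase j, p j * p k * p j = 0 := by
    have h := congrArg (fun x => p j * x * p j) hsum
    simp only [mul_one, hidem j hj, ← add_sum_erase s _ hj, mul_add, add_mul] at h
    simpa [mul_sum, sum_mul] using h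
  have htrace : ∑ k ∈ s.erase j, ((p k * p j)ᴴ * (p k * p j)).trace = 0 := by
    rw [← trace_sum, sum_congr rfl fun k hk => hgram k (mem_of_mem_erase hk), hoff, trace_zero]
  rw [sum_eq_zero_iff_of_nonneg fun k _ => (posSemidef_conjTranspose_mul_self _).trace_nonneg]
    at htrace
  exact trace_conjTranspose_mul_self_eq_zero_iff.1 (htrace i (mem_erase.2 ⟨hij, hi⟩))

end Projections

section FinsetProd

variable {β : Type*} [Monoid β] {c : ℕ} {P : Fin c → β}

theorem finsetProd_eq_noncommProd (hP : ∀ a a', Commute (P a) (P a')) (T : Finset (Fin c)) :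
    finsetProd P T = T.noncommProd P (fun a _ a' _ _ => hP a a') := by
  have h : T.val.map P = ((T.sort (· ≤ ·)).map P : Multiset β) := by
    rw [← Multiset.map_coe, sort_eq]
  simp only [finsetProd, noncommProd, h, Multiset.noncommProd_coe]

theorem finsetProd_mem {S : Type*} [SetLike S β] [SubmonoidClass S β] {s : S}
    (h : ∀ a, P a ∈ s) (T : Finset (Fin c)) : finsetProd P T ∈ s :=
  list_prod_mem fun _ hx => by
    obtain ⟨a, -, rfl⟩ := List.mem_map.1 hx
    exact h a

theorem Commute.finsetProd_right {x : β} (h : ∀ a, Commute x (P a)) (T : Finset (Fin c)) :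
    Commute x (finsetProd P T) :=
  Commute.list_prod_right _ _ fun _ hy => by
    obtain ⟨a, -, rfl⟩ := List.mem_map.1 hy
    exact h a

theorem finsetProd_eq_mul_erase (hP : ∀ a a', Commute (P a) (P a')) {a : Fin c}
    {T : Finset (Fin c)} (ha : a ∈ T) :
    finsetProd P T = P a * finsetProd P (T.erase a) := by
  rw [finsetProd_eq_noncommProd hP, finsetProd_eq_noncommProd hP]
  exact (mul_noncommProd_erase T ha P _).symm

theorem finsetProd_eq_erase_mul (hP : ∀ a a', Commute (P a) (P a')) {a : Fin c}
    {T : Finset (Fin c)} (ha : a ∈ T) :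
    finsetProd P T = finsetProd P (T.erase a) * P a := by
  rw [finsetProd_eq_noncommProd hP, finsetProd_eq_noncommProd hP]
  exact (noncommProd_erase_mul T ha P _).symm

theorem finsetProd_mul_self (hP : ∀ a a', Commute (P a) (P a'))
    (hidem : ∀ a, P a * P a = P a) (T : Finset (Fin c)) :
    finsetProd P T * finsetProd P T = finsetProd P T := by
  rw [finsetProd_eq_noncommProd hP]
  refine (noncommProd_mul_distrib P P _ _ fun a _ a' _ _ => hP a a').symm.trans ?_
  exact noncommProd_congr rfl (fun a _ => hidem a) _

theorem star_finsetProd [StarMul β] (hP : ∀ a a', Commute (P a) (P a'))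
    (hsa : ∀ a, star (P a) = P a) (T : Finset (Fin c)) :
    star (finsetProd P T) = finsetProd P T := by
  classical
  induction T using Finset.induction_on with
  | empty => simp [finsetProd]
  | insert a T ha ih =>
    rw [finsetProd_eq_mul_erase hP (mem_insert_self a T), erase_insert ha, star_mul, ih, hsa]
    exact (Commute.finsetProd_right (hP a) T).symm.eq

end FinsetProd

theorem Matrix.sum_kronecker {α ι l m n p : Type*} [NonUnitalNonAssocSemiring α]
    (s : Finset ι) (f : ι → Matrix l m α) (B : Matrix n p α) :
    (∑ i ∈ s, f i) ⊗ₖ B = ∑ i ∈ s, f i ⊗ₖ B := by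
  ext; simp [Matrix.sum_apply, sum_mul]

theorem Matrix.kronecker_sum {α ι l m n p : Type*} [NonUnitalNonAssocSemiring α]
    (s : Finset ι) (A : Matrix l m α) (f : ι → Matrix n p α) :
    A ⊗ₖ (∑ i ∈ s, f i) = ∑ i ∈ s, A ⊗ₖ f i := by
  ext; simp [Matrix.sum_apply, mul_sum]

section TensorSpan

variable {I J : Type*} [Fintype I] [Fintype J] [DecidableEq I] [DecidableEq J]

theorem one_mem_tensorSpan {M : Set (Matrix I I ℂ)} {N : Set (Matrix J J ℂ)} (hM : 1 ∈ M)
    (hN : 1 ∈ N) : 1 ∈ tensorSpan M N :=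
  Submodule.subset_span ⟨1, hM, 1, hN, one_kronecker_one.symm⟩

theorem mul_mem_tensorSpan_s18 {M : Set (Matrix I I ℂ)} {N : Set (Matrix J J ℂ)}
    (hM : ∀ x ∈ M, ∀ y ∈ M, x * y ∈ M) (hN : ∀ x ∈ N, ∀ y ∈ N, x * y ∈ N)
    {x y : Matrix (I × J) (I × J) ℂ} (hx : x ∈ tensorSpan M N) (hy : y ∈ tensorSpan M N) :
    x * y ∈ tensorSpan M N := by
  have hle : tensorSpan M N * tensorSpan M N ≤ tensorSpan M N := by
    rw [tensorSpan, Submodule.span_mul_span, Submodule.span_le]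
    rintro _ ⟨_, ⟨v, hv, w, hw, rfl⟩, _, ⟨v', hv', w', hw', rfl⟩, rfl⟩
    exact Submodule.subset_span ⟨v * v', hM v hv v' hv', w * w', hN w hw w' hw',
      (mul_kronecker_mul v v' w w').symm⟩
  exact hle (Submodule.mul_mem_mul hx hy)

theorem commute_kronecker_one_of_mem_commutant {M : Set (Matrix I I ℂ)} {v : Matrix I I ℂ}
    (hv : v ∈ commutant M) {x : Matrix (I × J) (I × J) ℂ} (hx : x ∈ tensorSpan M Set.univ) :
    Commute (v ⊗ₖ (1 : Matrix J J ℂ)) x := by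
  have hle : tensorSpan M Set.univ ≤
      (Subalgebra.centralizer ℂ {v ⊗ₖ (1 : Matrix J J ℂ)}).toSubmodule := by
    rw [tensorSpan, Submodule.span_le]
    rintro _ ⟨a, ha, w, -, rfl⟩ _ rfl
    rw [← mul_kronecker_mul, ← mul_kronecker_mul, one_mul, mul_one, hv a ha]
  exact hle hx _ rfl

theorem sandwich_eq_zero_of_mem_span {K : Type*} [Fintype K] [DecidableEq K]
    {s : Set (Matrix I I ℂ)} {R : Matrix (I × K) (I × K) ℂ}
    (h : ∀ X ∈ s, R * (X ⊗ₖ (1 : Matrix K K ℂ)) * R = 0) {X : Matrix I I ℂ}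
    (hX : X ∈ Submodule.span ℂ s) : R * (X ⊗ₖ (1 : Matrix K K ℂ)) * R = 0 := by
  induction hX using Submodule.span_induction with
  | mem X hX => exact h X hX
  | zero => simp
  | add X Y _ _ hX hY => rw [add_kronecker, mul_add, add_mul, hX, hY, add_zero]
  | smul r X _ hX => rw [smul_kronecker, mul_smul_comm, smul_mul_assoc, hX, smul_zero]

end TensorSpan

def kroneckerShuffle (I J : Type*) (k l : ℕ) :
    (I × Fin k) × (J × Fin l) ≃ (I × J) × Fin (k * l) :=
  (Equiv.prodProdProdComm I (Fin k) J (Fin l)).trans (.prodCongr (.refl _) finProdFinEquiv)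

theorem reindex_kroneckerShuffle_kronecker {I J α : Type*} [CommSemiring α] {k l : ℕ}
    (A : Matrix I I α) (C : Matrix (Fin k) (Fin k) α) (B : Matrix J J α)
    (D : Matrix (Fin l) (Fin l) α) :
    reindex (kroneckerShuffle I J k l) (kroneckerShuffle I J k l) ((A ⊗ₖ C) ⊗ₖ (B ⊗ₖ D)) =
      (A ⊗ₖ B) ⊗ₖ reindex finProdFinEquiv finProdFinEquiv (C ⊗ₖ D) := by
  ext ⟨⟨i, j⟩, s⟩ ⟨⟨i', j'⟩, s'⟩
  simp only [reindex_apply, submatrix_apply, kroneckerShuffle, Equiv.symm_trans_apply,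
    Equiv.prodCongr_symm, Equiv.refl_symm, Equiv.prodCongr_apply, Equiv.coe_refl, Prod.map,
    Equiv.prodProdProdComm_symm, Equiv.prodProdProdComm_apply, kroneckerMap_apply, id]
  ring

section Lexicographic

variable {I J : Type*} [Fintype I] [Fintype J] [DecidableEq I] [DecidableEq J] {b c k l : ℕ}

theorem kronecker_one_eq_reindex_kroneckerShuffle (v : Matrix I I ℂ) (w : Matrix J J ℂ) :
    (v ⊗ₖ w) ⊗ₖ (1 : Matrix (Fin (k * l)) (Fin (k * l)) ℂ) =
      reindexAlgEquiv ℂ ℂ (kroneckerShuffle I J k l)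
        ((v ⊗ₖ (1 : Matrix (Fin k) (Fin k) ℂ)) ⊗ₖ (w ⊗ₖ (1 : Matrix (Fin l) (Fin l) ℂ))) := by
  rw [coe_reindexAlgEquiv, reindex_kroneckerShuffle_kronecker, one_kronecker_one,
    reindex_apply, submatrix_one_equiv]

theorem reindexAlgEquiv_kronecker_mem_tensorSpan {M : Set (Matrix I I ℂ)}
    {N : Set (Matrix J J ℂ)} {Y : Matrix (I × Fin k) (I × Fin k) ℂ}
    (hY : Y ∈ tensorSpan M Set.univ) {Z : Matrix (J × Fin l) (J × Fin l) ℂ}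
    (hZ : Z ∈ tensorSpan N Set.univ) :
    reindexAlgEquiv ℂ ℂ (kroneckerShuffle I J k l) (Y ⊗ₖ Z) ∈
      tensorSpan (tensorSpan M N : Set (Matrix (I × J) (I × J) ℂ)) Set.univ := by
  let f := (kroneckerBilinear (R := ℂ) (α := ℂ)).compr₂
    (reindexAlgEquiv ℂ ℂ (kroneckerShuffle I J k l)).toLinearMap
  have hle : Submodule.map₂ f (tensorSpan M Set.univ) (tensorSpan N Set.univ) ≤
      tensorSpan (tensorSpan M N : Set (Matrix (I × J) (I × J) ℂ)) Set.univ := by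
    rw [tensorSpan, tensorSpan, Submodule.map₂_span_span, Submodule.span_le]
    rintro _ ⟨_, ⟨A, hA, C, -, rfl⟩, _, ⟨B, hB, D, -, rfl⟩, rfl⟩
    exact Submodule.subset_span ⟨A ⊗ₖ B, Submodule.subset_span ⟨A, hA, B, hB, rfl⟩, _, trivial,
      reindex_kroneckerShuffle_kronecker A C B D⟩
  exact hle (Submodule.apply_mem_map₂ f hY hZ)

-- The position of `a` in `T` (in increasing order); meaningful only when `a ∈ T` and `#T = b`.
def indexIn (hb : 0 < b) (T : Finset (Fin c)) (a : Fin c) : Fin b :=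
  if h : a ∈ T ∧ #T = b then (T.orderIsoOfFin h.2).symm ⟨a, h.1⟩ else ⟨0, hb⟩

theorem sum_indexIn {M : Type*} [AddCommMonoid M] (hb : 0 < b) {T : Finset (Fin c)}
    (hT : #T = b) (f : Fin b → M) : ∑ a ∈ T, f (indexIn hb T a) = ∑ i, f i := by
  rw [← sum_coe_sort T, ← (T.orderIsoOfFin hT).symm.toEquiv.sum_comp f]
  refine Fintype.sum_congr _ _ fun a => ?_
  rw [indexIn, dif_pos ⟨a.2, hT⟩]
  rfl

def lexColoring (hb : 0 < b) (P : Fin c → Matrix (I × Fin k) (I × Fin k) ℂ)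
    (Q : Fin b → Matrix (J × Fin l) (J × Fin l) ℂ) (a : Fin c) :
    Matrix ((I × J) × Fin (k * l)) ((I × J) × Fin (k * l)) ℂ :=
  reindexAlgEquiv ℂ ℂ (kroneckerShuffle I J k l)
    (∑ T ∈ powersetCard b univ with a ∈ T, finsetProd P T ⊗ₖ Q (indexIn hb T a))

end Lexicographic

namespace IsQBFoldColoring

variable {I : Type*} [Fintype I] [DecidableEq I] {b c k : ℕ} {S : Submodule ℂ (Matrix I I ℂ)}
  {M : Set (Matrix I I ℂ)} {P : Fin c → Matrix (I × Fin k) (I × Fin k) ℂ}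

theorem finsetProd_conjTranspose (hP : IsQBFoldColoring S M b P) (T : Finset (Fin c)) :
    (finsetProd P T)ᴴ = finsetProd P T :=
  star_finsetProd hP.2.1 hP.2.2.1 T

theorem finsetProd_mul_self (hP : IsQBFoldColoring S M b P) (T : Finset (Fin c)) :
    finsetProd P T * finsetProd P T = finsetProd P T :=
  _root_.finsetProd_mul_self hP.2.1 hP.2.2.2.1 T

theorem finsetProd_mul_finsetProd_eq_zero (hP : IsQBFoldColoring S M b P)
    {T T' : Finset (Fin c)} (hT : T ∈ powersetCard b univ) (hT' : T' ∈ powersetCard b univ)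
    (hne : T ≠ T') : finsetProd P T * finsetProd P T' = 0 :=
  Matrix.mul_eq_zero_of_sum_eq_one (fun T _ => hP.finsetProd_conjTranspose T)
    (fun T _ => hP.finsetProd_mul_self T) hP.2.2.2.2.1 hT hT' hne

theorem finsetProd_mem_tensorSpan (hP : IsQBFoldColoring S M b P) (hM1 : 1 ∈ M)
    (hMmul : ∀ x ∈ M, ∀ y ∈ M, x * y ∈ M) (T : Finset (Fin c)) :
    finsetProd P T ∈ tensorSpan M Set.univ := by
  let A := (tensorSpan M (Set.univ : Set (Matrix (Fin k) (Fin k) ℂ))).toSubalgebra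
    (one_mem_tensorSpan hM1 (Set.mem_univ 1))
    fun _ _ => mul_mem_tensorSpan_s18 hMmul fun _ _ _ _ => Set.mem_univ _
  exact finsetProd_mem (s := A) hP.1 T

end IsQBFoldColoring

section LexColoring

variable {I J : Type*} [Fintype I] [Fintype J] [DecidableEq I] [DecidableEq J] {b c k l : ℕ}
  {SG : Submodule ℂ (Matrix I I ℂ)} {MG : Set (Matrix I I ℂ)}
  {SH : Submodule ℂ (Matrix J J ℂ)} {MH : Set (Matrix J J ℂ)}
  {P : Fin c → Matrix (I × Fin k) (I × Fin k) ℂ} {Q : Fin b → Matrix (J × Fin l) (J × Fin l) ℂ}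

theorem lexColoring_mem (hb : 0 < b) (hP : IsQBFoldColoring SG MG b P)
    (hQ : IsQColoring SH MH Q) (hM1 : 1 ∈ MG) (hMmul : ∀ x ∈ MG, ∀ y ∈ MG, x * y ∈ MG)
    (a : Fin c) :
    lexColoring hb P Q a ∈
      tensorSpan (tensorSpan MG MH : Set (Matrix (I × J) (I × J) ℂ)) Set.univ := by
  rw [lexColoring, map_sum]
  exact Submodule.sum_mem _ fun T _ => reindexAlgEquiv_kronecker_mem_tensorSpan
    (hP.finsetProd_mem_tensorSpan hM1 hMmul T) (hQ.1 _)

theorem lexColoring_conjTranspose (hb : 0 < b) (hP : IsQBFoldColoring SG MG b P)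
    (hQ : IsQColoring SH MH Q) (a : Fin c) : (lexColoring hb P Q a)ᴴ = lexColoring hb P Q a := by
  rw [lexColoring, coe_reindexAlgEquiv, conjTranspose_reindex, conjTranspose_sum]
  congr 1
  refine sum_congr rfl fun T _ => ?_
  rw [conjTranspose_kronecker, hP.finsetProd_conjTranspose, hQ.2.1]

theorem lexColoring_mul_self (hb : 0 < b) (hP : IsQBFoldColoring SG MG b P)
    (hQ : IsQColoring SH MH Q) (a : Fin c) :
    lexColoring hb P Q a * lexColoring hb P Q a = lexColoring hb P Q a := by
  rw [lexColoring, ← map_mul, sum_mul_sum]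
  congr 1
  refine sum_congr rfl fun T hT => ?_
  rw [sum_eq_single_of_mem T hT, ← mul_kronecker_mul, hP.finsetProd_mul_self, hQ.2.2.1]
  intro T' hT' hne
  rw [← mul_kronecker_mul, hP.finsetProd_mul_finsetProd_eq_zero (mem_filter.1 hT).1
    (mem_filter.1 hT').1 hne.symm, zero_kronecker]

theorem sum_lexColoring (hb : 0 < b) (hP : IsQBFoldColoring SG MG b P)
    (hQ : IsQColoring SH MH Q) : ∑ a, lexColoring hb P Q a = 1 := by
  have hblock : ∀ T ∈ powersetCard b univ,
      ∑ a ∈ T, finsetProd P T ⊗ₖ Q (indexIn hb T a) = finsetProd P T ⊗ₖ 1 := fun T hT => by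
    rw [← kronecker_sum, sum_indexIn hb (mem_powersetCard.1 hT).2, hQ.2.2.2.1]
  calc ∑ a, lexColoring hb P Q a
      = reindexAlgEquiv ℂ ℂ (kroneckerShuffle I J k l)
          (∑ T ∈ powersetCard b univ, ∑ a ∈ T, finsetProd P T ⊗ₖ Q (indexIn hb T a)) := by
        simp only [lexColoring, ← map_sum]
        exact congrArg _ (sum_comm' fun a T => by simp [and_comm])
    _ = 1 := by
        rw [sum_congr rfl hblock, ← sum_kronecker, hP.2.2.2.2.1, one_kronecker_one, map_one]

theorem lexColoring_mul_kronecker_one_mul (hb : 0 < b) (v : Matrix I I ℂ) (w : Matrix J J ℂ)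
    (a : Fin c) :
    lexColoring hb P Q a * ((v ⊗ₖ w) ⊗ₖ 1) * lexColoring hb P Q a =
      reindexAlgEquiv ℂ ℂ (kroneckerShuffle I J k l)
        (∑ T ∈ powersetCard b univ with a ∈ T, ∑ T' ∈ powersetCard b univ with a ∈ T',
          (finsetProd P T * (v ⊗ₖ 1) * finsetProd P T') ⊗ₖ
            (Q (indexIn hb T a) * (w ⊗ₖ 1) * Q (indexIn hb T' a))) := by
  rw [lexColoring, kronecker_one_eq_reindex_kroneckerShuffle, ← map_mul, ← map_mul, sum_mul,
    sum_mul]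
  refine congrArg _ (sum_congr rfl fun T _ => ?_)
  rw [mul_sum]
  refine sum_congr rfl fun T' _ => ?_
  rw [← mul_kronecker_mul, ← mul_kronecker_mul]

theorem lexColoring_sandwich_of_mem_left (hb : 0 < b) (hP : IsQBFoldColoring SG MG b P)
    {v : Matrix I I ℂ} (hv : v ∈ SG) (w : Matrix J J ℂ) (a : Fin c) :
    lexColoring hb P Q a * ((v ⊗ₖ w) ⊗ₖ 1) * lexColoring hb P Q a = 0 := by
  rw [lexColoring_mul_kronecker_one_mul, sum_eq_zero fun T hT => sum_eq_zero fun T' hT' => ?_,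
    map_zero]
  have hsplit : finsetProd P T * (v ⊗ₖ 1) * finsetProd P T' =
      finsetProd P (T.erase a) * (P a * (v ⊗ₖ 1) * P a) * finsetProd P (T'.erase a) := by
    rw [finsetProd_eq_erase_mul hP.2.1 (mem_filter.1 hT).2,
      finsetProd_eq_mul_erase hP.2.1 (mem_filter.1 hT').2]
    simp only [mul_assoc]
  rw [hsplit, hP.2.2.2.2.2 v hv a, mul_zero, zero_mul, zero_kronecker]

theorem lexColoring_sandwich_of_mem_right (hb : 0 < b) (hP : IsQBFoldColoring SG MG b P)
    (hQ : IsQColoring SH MH Q) {v : Matrix I I ℂ} (hv : v ∈ commutant MG) {w : Matrix J J ℂ}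
    (hw : w ∈ SH) (a : Fin c) :
    lexColoring hb P Q a * ((v ⊗ₖ w) ⊗ₖ 1) * lexColoring hb P Q a = 0 := by
  rw [lexColoring_mul_kronecker_one_mul, sum_eq_zero fun T hT => sum_eq_zero fun T' hT' => ?_,
    map_zero]
  obtain rfl | hne := eq_or_ne T T'
  · rw [hQ.2.2.2.2 w hw, kronecker_zero]
  · have hcomm := Commute.finsetProd_right
      (fun a => commute_kronecker_one_of_mem_commutant hv (hP.1 a)) T'
    rw [mul_assoc, hcomm.eq, ← mul_assoc, hP.finsetProd_mul_finsetProd_eq_zero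
      (mem_filter.1 hT).1 (mem_filter.1 hT').1 hne, zero_mul, zero_kronecker]

theorem lexColoring_sandwich (hb : 0 < b) (hP : IsQBFoldColoring SG MG b P)
    (hQ : IsQColoring SH MH Q) {X : Matrix (I × J) (I × J) ℂ}
    (hX : X ∈ tensorSpan (SG : Set (Matrix I I ℂ)) Set.univ ⊔ tensorSpan (commutant MG) SH)
    (a : Fin c) : lexColoring hb P Q a * (X ⊗ₖ 1) * lexColoring hb P Q a = 0 := by
  obtain ⟨Y, hY, Z, hZ, rfl⟩ := Submodule.mem_sup.1 hX
  have hYzero := sandwich_eq_zero_of_mem_span (R := lexColoring hb P Q a) (by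
    rintro _ ⟨v, hv, w, -, rfl⟩
    exact lexColoring_sandwich_of_mem_left hb hP hv w a) hY
  have hZzero := sandwich_eq_zero_of_mem_span (R := lexColoring hb P Q a) (by
    rintro _ ⟨v, hv, w, hw, rfl⟩
    exact lexColoring_sandwich_of_mem_right hb hP hQ hv hw a) hZ
  rw [add_kronecker, mul_add, add_mul, hYzero, hZzero, add_zero]

theorem IsQColoring.lex (hb : 0 < b) (hP : IsQBFoldColoring SG MG b P)
    (hQ : IsQColoring SH MH Q) (hM1 : 1 ∈ MG) (hMmul : ∀ x ∈ MG, ∀ y ∈ MG, x * y ∈ MG) :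
    IsQColoring (tensorSpan (SG : Set (Matrix I I ℂ)) Set.univ ⊔ tensorSpan (commutant MG) SH)
      (tensorSpan MG MH : Set (Matrix (I × J) (I × J) ℂ)) (lexColoring hb P Q) :=
  ⟨lexColoring_mem hb hP hQ hM1 hMmul, lexColoring_conjTranspose hb hP hQ,
    lexColoring_mul_self hb hP hQ, sum_lexColoring hb hP hQ,
    fun _ hX => lexColoring_sandwich hb hP hQ hX⟩

end LexColoring

section ChromaticNumbers

variable {I J : Type*} [Fintype I] [Fintype J] [DecidableEq I] [DecidableEq J] {b c : ℕ}
  {SG : Submodule ℂ (Matrix I I ℂ)} {MG : Set (Matrix I I ℂ)}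
  {SH : Submodule ℂ (Matrix J J ℂ)} {MH : Set (Matrix J J ℂ)}

theorem HasQColoring.lex (hb : 0 < b) (hH : HasQColoring SH MH b)
    (hG : HasQBFoldColoring SG MG b c) (hM1 : 1 ∈ MG)
    (hMmul : ∀ x ∈ MG, ∀ y ∈ MG, x * y ∈ MG) :
    HasQColoring (tensorSpan (SG : Set (Matrix I I ℂ)) Set.univ ⊔ tensorSpan (commutant MG) SH)
      (tensorSpan MG MH : Set (Matrix (I × J) (I × J) ℂ)) c := by
  obtain ⟨l, hl, Q, hQ⟩ := hH
  obtain ⟨k, hk, P, hP⟩ := hG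
  exact ⟨k * l, Nat.mul_le_mul hk hl, lexColoring hb P Q, hQ.lex hb hP hM1 hMmul⟩

end ChromaticNumbers

theorem mem_of_iInf_natCast_eq {p : ℕ → Prop} {b : ℕ} (h : ⨅ (c : ℕ) (_ : p c), (c : ℕ∞) = b) :
    p b := by
  rw [iInf_subtype'] at h
  have : Nonempty {c // p c} := by
    by_contra hempty
    rw [not_nonempty_iff, ← ENat.iInf_natCast_eq_top (f := Subtype.val), h] at hempty
    exact ENat.natCast_ne_top b hempty
  obtain ⟨c, hc⟩ := ENat.exists_eq_iInf fun c : {c // p c} => (c : ℕ∞)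
  rw [h, Nat.cast_inj] at hc
  exact hc ▸ c.2

section QColoring

variable {I : Type*} [Fintype I] [DecidableEq I] {S : Submodule ℂ (Matrix I I ℂ)}
  {M : Set (Matrix I I ℂ)}

theorem HasQColoring.of_qChrom_eq {b : ℕ} (h : qChrom S M = b) : HasQColoring S M b :=
  mem_of_iInf_natCast_eq h

theorem HasQColoring.of_isEmpty [IsEmpty I] (c : ℕ) : HasQColoring S M c :=
  ⟨1, le_rfl, fun _ => 0, fun _ => Submodule.zero_mem _, fun _ => conjTranspose_zero,
    fun _ => mul_zero 0, Subsingleton.elim _ _, fun _ _ _ => by simp⟩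

theorem HasQColoring.isEmpty_of_zero (h : HasQColoring S M 0) : IsEmpty I := by
  obtain ⟨k, hk, P, -, -, -, hsum, -⟩ := h
  refine ⟨fun i => ?_⟩
  simpa using congrFun (congrFun hsum (i, ⟨0, hk⟩)) (i, ⟨0, hk⟩)

end QColoring

theorem lexicographic_bound_general {n m : ℕ}
    (SG : Submodule ℂ (Matrix (Fin n) (Fin n) ℂ))
    (MG : StarSubalgebra ℂ (Matrix (Fin n) (Fin n) ℂ))
    (SH : Submodule ℂ (Matrix (Fin m) (Fin m) ℂ))
    (MH : StarSubalgebra ℂ (Matrix (Fin m) (Fin m) ℂ)) :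
    (∀ b c : ℕ, 1 ≤ b → 1 ≤ c →
      HasQColoring SH (MH : Set (Matrix (Fin m) (Fin m) ℂ)) b →
        HasQBFoldColoring SG (MG : Set (Matrix (Fin n) (Fin n) ℂ)) b c →
          HasQColoring (tensorSpan (SG : Set (Matrix (Fin n) (Fin n) ℂ)) (Set.univ : Set (Matrix (Fin m) (Fin m) ℂ)) ⊔ tensorSpan (commutant (MG : Set (Matrix (Fin n) (Fin n) ℂ))) (SH : Set (Matrix (Fin m) (Fin m) ℂ))) ((tensorSpan (MG : Set (Matrix (Fin n) (Fin n) ℂ)) (MH : Set (Matrix (Fin m) (Fin m) ℂ)) : Submodule ℂ (Matrix (Fin n × Fin m) (Fin n × Fin m) ℂ)) : Set (Matrix (Fin n × Fin m) (Fin n × Fin m) ℂ)) c)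
    ∧ (∀ b : ℕ, qChrom SH (MH : Set (Matrix (Fin m) (Fin m) ℂ)) = (b : ℕ∞) →
        qChrom (tensorSpan (SG : Set (Matrix (Fin n) (Fin n) ℂ)) (Set.univ : Set (Matrix (Fin m) (Fin m) ℂ)) ⊔ tensorSpan (commutant (MG : Set (Matrix (Fin n) (Fin n) ℂ))) (SH : Set (Matrix (Fin m) (Fin m) ℂ))) ((tensorSpan (MG : Set (Matrix (Fin n) (Fin n) ℂ)) (MH : Set (Matrix (Fin m) (Fin m) ℂ)) : Submodule ℂ (Matrix (Fin n × Fin m) (Fin n × Fin m) ℂ)) : Set (Matrix (Fin n × Fin m) (Fin n × Fin m) ℂ)) ≤ qbChrom SG (MG : Set (Matrix (Fin n) (Fin n) ℂ)) b) := by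
  have hMmul : ∀ x ∈ (MG : Set (Matrix (Fin n) (Fin n) ℂ)), ∀ y ∈ (MG : Set _), x * y ∈ MG :=
    fun _ hx _ hy => MG.mul_mem hx hy
  refine ⟨fun b c hb _ hH hG => hH.lex hb hG MG.one_mem hMmul,
    fun b hb => le_iInf₂ fun c hG => iInf₂_le c ?_⟩
  have hH := HasQColoring.of_qChrom_eq hb
  rcases Nat.eq_zero_or_pos b with rfl | hb
  · have := hH.isEmpty_of_zero
    exact .of_isEmpty c
  · exact hH.lex hb hG MG.one_mem hMmul

theorem lexicographic_bound {n m : ℕ}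
    (SG : Submodule ℂ (Matrix (Fin n) (Fin n) ℂ))
    (MG : StarSubalgebra ℂ (Matrix (Fin n) (Fin n) ℂ))
    (SH : Submodule ℂ (Matrix (Fin m) (Fin m) ℂ))
    (MH : StarSubalgebra ℂ (Matrix (Fin m) (Fin m) ℂ))
    (hG : IsQuantumGraph SG (MG : Set (Matrix (Fin n) (Fin n) ℂ)))
    (hH : IsQuantumGraph SH (MH : Set (Matrix (Fin m) (Fin m) ℂ))) :
    (∀ b c : ℕ, 1 ≤ b → 1 ≤ c →
      HasQColoring SH (MH : Set (Matrix (Fin m) (Fin m) ℂ)) b →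
        HasQBFoldColoring SG (MG : Set (Matrix (Fin n) (Fin n) ℂ)) b c →
          HasQColoring (tensorSpan (SG : Set (Matrix (Fin n) (Fin n) ℂ)) (Set.univ : Set (Matrix (Fin m) (Fin m) ℂ)) ⊔ tensorSpan (commutant (MG : Set (Matrix (Fin n) (Fin n) ℂ))) (SH : Set (Matrix (Fin m) (Fin m) ℂ))) ((tensorSpan (MG : Set (Matrix (Fin n) (Fin n) ℂ)) (MH : Set (Matrix (Fin m) (Fin m) ℂ)) : Submodule ℂ (Matrix (Fin n × Fin m) (Fin n × Fin m) ℂ)) : Set (Matrix (Fin n × Fin m) (Fin n × Fin m) ℂ)) c)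
    ∧ (∀ b : ℕ, qChrom SH (MH : Set (Matrix (Fin m) (Fin m) ℂ)) = (b : ℕ∞) →
        qChrom (tensorSpan (SG : Set (Matrix (Fin n) (Fin n) ℂ)) (Set.univ : Set (Matrix (Fin m) (Fin m) ℂ)) ⊔ tensorSpan (commutant (MG : Set (Matrix (Fin n) (Fin n) ℂ))) (SH : Set (Matrix (Fin m) (Fin m) ℂ))) ((tensorSpan (MG : Set (Matrix (Fin n) (Fin n) ℂ)) (MH : Set (Matrix (Fin m) (Fin m) ℂ)) : Submodule ℂ (Matrix (Fin n × Fin m) (Fin n × Fin m) ℂ)) : Set (Matrix (Fin n × Fin m) (Fin n × Fin m) ℂ)) ≤ qbChrom SG (MG : Set (Matrix (Fin n) (Fin n) ℂ)) b) :=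
  lexicographic_bound_general SG MG SH MH

end
end
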